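/- arXiv:1103.1176 — 7 statements merged into one kernel-verified Lean document; each statement's English description precedes it below -/
import Mathlib

section
/- For every positive integer n, all complex numbers x, y, and every complex number ω satisfying y ω² + (1−x−y) ω + x = 0, one has det M_ASM(n,x,y,1) = det M_DPP(n,x,y,1). -/
open Finset Matrix

/-- M_ASM(n,x,y,1)_{i j} = (1−ω) δ_{i j} + ω ∑_{k=0}^{min(i,j)} C(i,k) C(j,k) x^k y^{i−k}. -/
noncomputable def MASM1 (n : ℕ) (x y ω : ℂ) : Matrix (Fin n) (Fin n) ℂ :=
  Matrix.of fun i j =>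
    (1 - ω) * (if i = j then 1 else 0) +
      ω * ∑ k ∈ Finset.range (min (i : ℕ) (j : ℕ) + 1),
        (Nat.choose i k : ℂ) * (Nat.choose j k : ℂ) * x ^ k * y ^ ((i : ℕ) - k)

/-- M_DPP(n,x,y,1)_{i j} = −δ_{i,j+1} + ∑_{k=0}^{min(i,j+1)} C(i−1,i−k) C(j+1,k) x^k y^{i−k},
with the conventions C(−1,0) = 1 and C(a,b) = 0 for 0 ≤ a < b (realised by
truncated subtraction on ℕ). -/
noncomputable def MDPP1 (n : ℕ) (x y : ℂ) : Matrix (Fin n) (Fin n) ℂ :=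
  Matrix.of fun i j =>
    -(if (i : ℕ) = (j : ℕ) + 1 then 1 else 0) +
      ∑ k ∈ Finset.range (min (i : ℕ) ((j : ℕ) + 1) + 1),
        (Nat.choose ((i : ℕ) - 1) ((i : ℕ) - k) : ℂ) * (Nat.choose ((j : ℕ) + 1) k : ℂ) *
          x ^ k * y ^ ((i : ℕ) - k)

/-- ASM sum with uniform range. -/
noncomputable def Sf (x y : ℂ) (i j : ℕ) : ℂ :=
  ∑ k ∈ Finset.range (i + 1), (i.choose k : ℂ) * (j.choose k : ℂ) * x ^ k * y ^ (i - k)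

/-- auxiliary sum R. -/
noncomputable def Rf (x y : ℂ) (i j : ℕ) : ℂ :=
  ∑ k ∈ Finset.range (i + 1), (i.choose k : ℂ) * ((j + 1).choose (k + 1) : ℂ) * x ^ k * y ^ (i - k)

/-- DPP sum with uniform range. -/
noncomputable def Tf (x y : ℂ) (i j : ℕ) : ℂ :=
  ∑ k ∈ Finset.range (i + 1), ((i - 1).choose (i - k) : ℂ) * ((j + 1).choose k : ℂ) * x ^ k * y ^ (i - k)

lemma Sf_zero_left (x y : ℂ) (j : ℕ) : Sf x y 0 j = 1 := by
  simp [Sf]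

lemma Tf_zero_left (x y : ℂ) (j : ℕ) : Tf x y 0 j = 1 := by
  simp [Tf]

lemma Sf_zero_right (x y : ℂ) (i : ℕ) : Sf x y i 0 = y ^ i := by
  rw [Sf, Finset.sum_eq_single 0]
  · simp
  · intro k _ hk
    have : (0 : ℕ) < k := Nat.pos_of_ne_zero hk
    simp [Nat.choose_eq_zero_of_lt this]
  · intro h; exact absurd (Finset.mem_range.mpr (Nat.succ_pos i)) h

lemma Rf_zero_right (x y : ℂ) (i : ℕ) : Rf x y i 0 = y ^ i := by
  rw [Rf, Finset.sum_eq_single 0]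
  · simp
  · intro k _ hk
    have : (1 : ℕ) < k + 1 := by omega
    simp [Nat.choose_eq_zero_of_lt this]
  · intro h; exact absurd (Finset.mem_range.mpr (Nat.succ_pos i)) h

lemma Tf_succ (x y : ℂ) (i j : ℕ) : Tf x y (i + 1) j = x * Rf x y i j := by
  rw [Tf, Finset.sum_range_succ', Rf, Finset.mul_sum]
  have h0 : ((i + 1 - 1).choose (i + 1 - 0) : ℂ) = 0 := by
    simp [Nat.choose_eq_zero_of_lt (Nat.lt_succ_self i)]
  rw [h0]
  simp only [zero_mul, mul_zero, add_zero]
  refine Finset.sum_congr rfl fun k hk => ?_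
  have hki : k ≤ i := by simpa [Nat.lt_succ_iff] using hk
  have h1 : i + 1 - 1 = i := rfl
  have h2 : i + 1 - (k + 1) = i - k := by omega
  rw [h1, h2, Nat.choose_symm hki]
  ring

lemma Rf_pascal (x y : ℂ) (i j : ℕ) :
    Rf x y i (j + 1) = Sf x y i (j + 1) + Rf x y i j := by
  rw [Rf, Sf, Rf, ← Finset.sum_add_distrib]
  refine Finset.sum_congr rfl fun k _ => ?_
  have : ((j + 2).choose (k + 1) : ℂ) = ((j + 1).choose k : ℂ) + ((j + 1).choose (k + 1) : ℂ) := by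
    rw [show j + 2 = (j + 1) + 1 from rfl]
    push_cast [Nat.choose_succ_succ]
    ring
  rw [this]; ring

lemma Sf_succ (x y : ℂ) (i j : ℕ) :
    Sf x y (i + 1) (j + 1) = y * Sf x y i (j + 1) + x * Rf x y i j := by
  have hS : y * Sf x y i (j + 1) =
      (∑ k ∈ Finset.range (i + 1),
        (i.choose (k + 1) : ℂ) * ((j + 1).choose (k + 1) : ℂ) * x ^ (k + 1) * y ^ (i - k)) +
      y ^ (i + 1) := by
    rw [Sf, Finset.sum_range_succ', Finset.sum_range_succ]
    have h0 : (i.choose (i + 1) : ℂ) = 0 := by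
      simp [Nat.choose_eq_zero_of_lt (Nat.lt_succ_self i)]
    rw [h0]
    simp only [zero_mul, mul_zero, add_zero, Nat.choose_zero_right, Nat.cast_one,
      Nat.sub_zero, one_mul, pow_zero, mul_one]
    rw [mul_add, Finset.mul_sum]
    congr 1
    · refine Finset.sum_congr rfl fun k hk => ?_
      have hki : k < i := Finset.mem_range.mp hk
      have : i - k = (i - (k + 1)) + 1 := by omega
      rw [this, pow_succ]
      ring
    · rw [← pow_succ']
  rw [Sf, Finset.sum_range_succ', hS, Rf, Finset.mul_sum]
  simp only [Nat.choose_zero_right, Nat.cast_one, Nat.sub_zero, pow_zero, mul_one, one_mul]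
  rw [add_assoc, add_comm (y ^ (i+1)), ← add_assoc, ← Finset.sum_add_distrib]
  congr 1
  refine Finset.sum_congr rfl fun k _ => ?_
  have hp : ((i + 1).choose (k + 1) : ℂ) = (i.choose k : ℂ) + (i.choose (k + 1) : ℂ) := by
    push_cast [Nat.choose_succ_succ]
    ring
  have h2 : i + 1 - (k + 1) = i - k := by omega
  rw [h2, hp]
  ring

/-- entry formula for MASM1 with uniform range. -/
lemma MASM1_apply (n : ℕ) (x y ω : ℂ) (i j : Fin n) :
    MASM1 n x y ω i j =
      (1 - ω) * (if (i : ℕ) = (j : ℕ) then 1 else 0) + ω * Sf x y i j := by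
  unfold MASM1 Sf
  rw [Matrix.of_apply]
  congr 1
  · congr 1
    simp [Fin.ext_iff]
  · congr 1
    refine Finset.sum_subset ?_ ?_
    · intro k hk
      simp only [Finset.mem_range] at hk ⊢
      omega
    · intro k hk hnk
      simp only [Finset.mem_range] at hk hnk
      have : (j : ℕ) < k := by omega
      simp [Nat.choose_eq_zero_of_lt this]

lemma MDPP1_apply (n : ℕ) (x y : ℂ) (i j : Fin n) :
    MDPP1 n x y i j =
      -(if (i : ℕ) = (j : ℕ) + 1 then 1 else 0) + Tf x y i j := by
  unfold MDPP1 Tf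
  rw [Matrix.of_apply]
  congr 1
  refine Finset.sum_subset ?_ ?_
  · intro k hk
    simp only [Finset.mem_range] at hk ⊢
    omega
  · intro k hk hnk
    simp only [Finset.mem_range] at hk hnk
    have : (j : ℕ) + 1 < k := by omega
    simp [Nat.choose_eq_zero_of_lt this]

/-- lower bidiagonal matrix B. -/
noncomputable def Bmat (n : ℕ) (c : ℂ) : Matrix (Fin n) (Fin n) ℂ :=
  Matrix.of fun i k => if (i : ℕ) = (k : ℕ) then c else if (i : ℕ) = (k : ℕ) + 1 then -1 else 0

/-- upper bidiagonal matrix U. -/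
noncomputable def Umat (n : ℕ) (c : ℂ) : Matrix (Fin n) (Fin n) ℂ :=
  Matrix.of fun k j => if (k : ℕ) = (j : ℕ) then c else if (j : ℕ) = (k : ℕ) + 1 then -(c ^ 2) else 0

lemma Bmat_det (n : ℕ) (c : ℂ) : (Bmat n c).det = c ^ n := by
  rw [Matrix.det_of_lowerTriangular (Bmat n c)]
  · simp [Bmat]
  · intro i j h
    have : (i : ℕ) < (j : ℕ) := h
    simp only [Bmat, Matrix.of_apply]
    rw [if_neg (by omega), if_neg (by omega)]

lemma Umat_det (n : ℕ) (c : ℂ) : (Umat n c).det = c ^ n := by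
  rw [Matrix.det_of_upperTriangular]
  · simp [Umat]
  · intro i j h
    have : (j : ℕ) < (i : ℕ) := h
    simp only [Umat, Matrix.of_apply]
    rw [if_neg (by omega), if_neg (by omega)]

lemma sumB (n : ℕ) (c : ℂ) (g : ℕ → ℂ) (i : Fin n) :
    (∑ m ∈ Finset.range n, (if (i : ℕ) = m then c else if (i : ℕ) = m + 1 then -1 else 0) * g m)
      = c * g i - (if (i : ℕ) = 0 then 0 else g ((i : ℕ) - 1)) := by
  by_cases hi : (i : ℕ) = 0
  · rw [if_pos hi]
    have hconv : ∀ m ∈ Finset.range n,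
        (if (i : ℕ) = m then c else if (i : ℕ) = m + 1 then -1 else 0) * g m
          = if m = (i : ℕ) then c * g m else 0 := by
      intro m _
      split_ifs with h1 h2 h3 h3 <;> (first | ring1 | (exfalso; omega))
    rw [Finset.sum_congr rfl hconv, Finset.sum_ite_eq' (Finset.range n) ((i : ℕ)) (fun m => c * g m),
      if_pos (Finset.mem_range.mpr i.isLt)]
    ring
  · obtain ⟨a, ha⟩ := Nat.exists_eq_succ_of_ne_zero hi
    rw [if_neg hi]
    have hconv : ∀ m ∈ Finset.range n,
        (if (i : ℕ) = m then c else if (i : ℕ) = m + 1 then -1 else 0) * g m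
          = (if m = (i : ℕ) then c * g m else 0) + (if m = a then -g m else 0) := by
      intro m _
      split_ifs with h1 h2 h3 h4 h5 <;> (first | ring1 | (exfalso; omega))
    rw [Finset.sum_congr rfl hconv, Finset.sum_add_distrib,
      Finset.sum_ite_eq' (Finset.range n) ((i : ℕ)) (fun m => c * g m),
      Finset.sum_ite_eq' (Finset.range n) a (fun m => -g m),
      if_pos (Finset.mem_range.mpr i.isLt), if_pos (Finset.mem_range.mpr (by omega : a < n))]
    rw [ha]
    simp only [Nat.succ_sub_one]
    ring

lemma sumU (n : ℕ) (c : ℂ) (h : ℕ → ℂ) (j : Fin n) :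
    (∑ m ∈ Finset.range n, h m * (if m = (j : ℕ) then c else if (j : ℕ) = m + 1 then -(c ^ 2) else 0))
      = c * h j - (if (j : ℕ) = 0 then 0 else c ^ 2 * h ((j : ℕ) - 1)) := by
  by_cases hj : (j : ℕ) = 0
  · rw [if_pos hj]
    have hconv : ∀ m ∈ Finset.range n,
        h m * (if m = (j : ℕ) then c else if (j : ℕ) = m + 1 then -(c ^ 2) else 0)
          = if m = (j : ℕ) then c * h m else 0 := by
      intro m _
      split_ifs with h1 h2 h3 <;> (first | ring1 | (exfalso; omega))
    rw [Finset.sum_congr rfl hconv, Finset.sum_ite_eq' (Finset.range n) ((j : ℕ)) (fun m => c * h m),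
      if_pos (Finset.mem_range.mpr j.isLt)]
    ring
  · obtain ⟨b, hb⟩ := Nat.exists_eq_succ_of_ne_zero hj
    rw [if_neg hj]
    have hconv : ∀ m ∈ Finset.range n,
        h m * (if m = (j : ℕ) then c else if (j : ℕ) = m + 1 then -(c ^ 2) else 0)
          = (if m = (j : ℕ) then c * h m else 0) + (if m = b then -(c ^ 2) * h m else 0) := by
      intro m _
      split_ifs with h1 h2 h3 h4 h5 <;> (first | ring1 | (exfalso; omega))
    rw [Finset.sum_congr rfl hconv, Finset.sum_add_distrib,
      Finset.sum_ite_eq' (Finset.range n) ((j : ℕ)) (fun m => c * h m),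
      Finset.sum_ite_eq' (Finset.range n) b (fun m => -(c ^ 2) * h m),
      if_pos (Finset.mem_range.mpr j.isLt), if_pos (Finset.mem_range.mpr (by omega : b < n))]
    rw [hb]
    simp only [Nat.succ_sub_one]
    ring


lemma entry_identity (x y ω : ℂ) (hrel : ω * ((1 - ω) * y - 1) = (1 - ω) * x) (ii jj : ℕ) :
    (1 - ω) * ((1 - ω) * (if ii = jj then 1 else 0) + ω * Sf x y ii jj)
      - (if ii = 0 then 0 else
          (1 - ω) * (if ii - 1 = jj then 1 else 0) + ω * Sf x y (ii - 1) jj)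
    = (1 - ω) * (-(if ii = jj + 1 then 1 else 0) + Tf x y ii jj)
      - (if jj = 0 then 0 else
          (1 - ω) ^ 2 * (-(if ii = jj - 1 + 1 then 1 else 0) + Tf x y ii (jj - 1))) := by
  rcases ii with _ | a <;> rcases jj with _ | b
  · -- (0,0)
    simp [Sf_zero_left, Tf_zero_left]
  · -- (0,b+1)
    simp [Sf_zero_left, Tf_zero_left]
    ring
  · -- (a+1,0)
    rw [if_neg (Nat.succ_ne_zero a), if_pos rfl]
    simp only [Nat.add_sub_cancel, Nat.zero_add, Sf_zero_right, Tf_succ, Rf_zero_right]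
    rw [if_neg (Nat.succ_ne_zero a)]
    by_cases ha : a = 0
    · rw [if_pos ha, if_pos (by omega : a + 1 = 0 + 1)]
      subst ha
      linear_combination (y ^ (0:ℕ)) * hrel
    · rw [if_neg ha, if_neg (by omega : ¬(a + 1 = 0 + 1))]
      linear_combination (y ^ a) * hrel
  · -- (a+1,b+1)
    rw [if_neg (Nat.succ_ne_zero a), if_neg (Nat.succ_ne_zero b)]
    simp only [Nat.add_sub_cancel]
    rw [Sf_succ, Tf_succ, Tf_succ,
      show Sf x y a (b + 1) = Rf x y a (b + 1) - Rf x y a b by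
        rw [Rf_pascal]; ring]
    simp only [show ((a + 1 = b + 1) ↔ (a = b)) from by omega,
      show ((a + 1 = b + 1 + 1) ↔ (a = b + 1)) from by omega]
    by_cases h1 : a = b <;> by_cases h2 : a = b + 1
    · omega
    · rw [if_pos h1, if_neg h2]
      linear_combination (Rf x y a (b + 1) - Rf x y a b) * hrel
    · rw [if_neg h1, if_pos h2]
      linear_combination (Rf x y a (b + 1) - Rf x y a b) * hrel
    · rw [if_neg h1, if_neg h2]
      linear_combination (Rf x y a (b + 1) - Rf x y a b) * hrel

lemma key_identity (n : ℕ) (x y ω : ℂ)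
    (hrel : ω * ((1 - ω) * y - 1) = (1 - ω) * x) :
    Bmat n (1 - ω) * MASM1 n x y ω = MDPP1 n x y * Umat n (1 - ω) := by
  ext i j
  have hL : (Bmat n (1 - ω) * MASM1 n x y ω) i j
      = ∑ m ∈ Finset.range n,
          (if (i : ℕ) = m then (1 - ω) else if (i : ℕ) = m + 1 then -1 else 0) *
            ((1 - ω) * (if m = (j : ℕ) then 1 else 0) + ω * Sf x y m (j : ℕ)) := by
    rw [Matrix.mul_apply, ← Fin.sum_univ_eq_sum_range]
    refine Finset.sum_congr rfl fun k _ => ?_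
    rw [MASM1_apply]
    rfl
  have hR : (MDPP1 n x y * Umat n (1 - ω)) i j
      = ∑ m ∈ Finset.range n,
          (-(if (i : ℕ) = m + 1 then 1 else 0) + Tf x y (i : ℕ) m) *
            (if m = (j : ℕ) then (1 - ω) else if (j : ℕ) = m + 1 then -((1 - ω) ^ 2) else 0) := by
    rw [Matrix.mul_apply, ← Fin.sum_univ_eq_sum_range]
    refine Finset.sum_congr rfl fun k _ => ?_
    rw [MDPP1_apply]
    rfl
  rw [hL, hR,
    sumB n (1 - ω) (fun m => (1 - ω) * (if m = (j : ℕ) then 1 else 0) + ω * Sf x y m (j : ℕ)) i,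
    sumU n (1 - ω) (fun m => -(if (i : ℕ) = m + 1 then 1 else 0) + Tf x y (i : ℕ) m) j]
  exact entry_identity x y ω hrel (i : ℕ) (j : ℕ)

/-- Proposition 2.3: det M_ASM(n,x,y,1) = det M_DPP(n,x,y,1). -/
theorem det_MASM1_eq_det_MDPP1 (n : ℕ) (hn : 0 < n) (x y ω : ℂ)
    (hω : y * ω ^ 2 + (1 - x - y) * ω + x = 0) :
    (MASM1 n x y ω).det = (MDPP1 n x y).det := by
  have hc : (1 : ℂ) - ω ≠ 0 := by
    intro h
    have hω1 : ω = 1 := by linear_combination -h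
    rw [hω1] at hω
    have : (1 : ℂ) = 0 := by linear_combination hω
    exact one_ne_zero this
  have hrel : ω * ((1 - ω) * y - 1) = (1 - ω) * x := by linear_combination -hω
  have hkey := key_identity n x y ω hrel
  have hdet := congrArg Matrix.det hkey
  rw [Matrix.det_mul, Matrix.det_mul, Bmat_det, Umat_det] at hdet
  have hpow : (1 - ω) ^ n ≠ 0 := pow_ne_zero _ hc
  apply mul_left_cancel₀ hpow
  rw [hdet]
  ring
end

section
/- For every positive integer n, all complex numbers x, y, z, and every complex number ω satisfying y ω² + (1−x−y) ω + x = 0, one has det M_ASM(n,x,y,z) = det M_DPP(n,x,y,z). -/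
open Finset Matrix

/-- The refined matrix M_ASM(n,x,y,z). -/
noncomputable def MASMz (n : ℕ) (x y z ω : ℂ) : Matrix (Fin n) (Fin n) ℂ :=
  Matrix.of fun i j =>
    if (j : ℕ) = n - 1 then
      (1 - ω) * (if i = j then 1 else 0) +
        ω * ∑ k ∈ Finset.range ((i : ℕ) + 1), ∑ l ∈ Finset.range (k + 1),
          (Nat.choose i k : ℂ) * (Nat.choose (n - l - 2) (k - l) : ℂ) *
            x ^ k * y ^ ((i : ℕ) - k) * z ^ (l + 1)
    else
      (1 - ω) * (if i = j then 1 else 0) +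
        ω * ∑ k ∈ Finset.range (min (i : ℕ) (j : ℕ) + 1),
          (Nat.choose i k : ℂ) * (Nat.choose j k : ℂ) * x ^ k * y ^ ((i : ℕ) - k)

/-- The refined matrix M_DPP(n,x,y,z). -/
noncomputable def MDPPz (n : ℕ) (x y z ω : ℂ) : Matrix (Fin n) (Fin n) ℂ :=
  Matrix.of fun i j =>
    if (j : ℕ) = n - 1 then
      (1 + ω * (z - 1)) *
        ∑ k ∈ Finset.range ((i : ℕ) + 1), ∑ l ∈ Finset.range (k + 1),
          (Nat.choose ((i : ℕ) - 1) ((i : ℕ) - k) : ℂ) *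
            (Nat.choose (n - l - 1) (k - l) : ℂ) * x ^ k * y ^ ((i : ℕ) - k) * z ^ l
    else
      -(if (i : ℕ) = (j : ℕ) + 1 then 1 else 0) +
        ∑ k ∈ Finset.range (min (i : ℕ) ((j : ℕ) + 1) + 1),
          (Nat.choose ((i : ℕ) - 1) ((i : ℕ) - k) : ℂ) * (Nat.choose ((j : ℕ) + 1) k : ℂ) *
            x ^ k * y ^ ((i : ℕ) - k)

noncomputable def aS (x y : ℂ) (i j : ℕ) : ℂ :=
  ∑ k ∈ Finset.range (min i j + 1),
    (Nat.choose i k : ℂ) * (Nat.choose j k : ℂ) * x ^ k * y ^ (i - k)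

noncomputable def dS (x y : ℂ) (i j : ℕ) : ℂ :=
  ∑ k ∈ Finset.range (min i (j + 1) + 1),
    (Nat.choose (i - 1) (i - k) : ℂ) * (Nat.choose (j + 1) k : ℂ) * x ^ k * y ^ (i - k)

noncomputable def gS (n : ℕ) (x y z : ℂ) (i : ℕ) : ℂ :=
  ∑ k ∈ Finset.range (i + 1), ∑ l ∈ Finset.range (k + 1),
    (Nat.choose i k : ℂ) * (Nat.choose (n - l - 2) (k - l) : ℂ) *
      x ^ k * y ^ (i - k) * z ^ (l + 1)

noncomputable def hS (n : ℕ) (x y z : ℂ) (i : ℕ) : ℂ :=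
  ∑ k ∈ Finset.range (i + 1), ∑ l ∈ Finset.range (k + 1),
    (Nat.choose (i - 1) (i - k) : ℂ) * (Nat.choose (n - l - 1) (k - l) : ℂ) *
      x ^ k * y ^ (i - k) * z ^ l

lemma aS_zero (x y : ℂ) (i : ℕ) : aS x y i 0 = y ^ i := by simp [aS]
lemma aS_zero' (x y : ℂ) (j : ℕ) : aS x y 0 j = 1 := by simp [aS]
lemma dS_zero' (x y : ℂ) (j : ℕ) : dS x y 0 j = 1 := by simp [dS]
lemma dS_zero (x y : ℂ) (i : ℕ) : dS x y (i+1) 0 = x * y ^ i := by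
  simp [dS, Finset.sum_range_succ, Nat.choose_eq_zero_of_lt (Nat.lt_succ_self i)]
lemma gS_zero (n : ℕ) (x y z : ℂ) : gS n x y z 0 = z := by simp [gS]
lemma hS_zero (n : ℕ) (x y z : ℂ) : hS n x y z 0 = 1 := by simp [hS]

lemma B2 (x y : ℂ) (i j : ℕ) :
    aS x y (i+1) (j+1) = dS x y (i+1) j + y * aS x y i (j+1) := by
  rw [aS, dS, aS, Finset.mul_sum]
  simp only [Nat.add_sub_cancel]
  have hsub : Finset.range (min i (j+1) + 1) ⊆ Finset.range (min (i+1) (j+1) + 1) :=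
    Finset.range_subset_range.mpr (by omega)
  rw [Finset.sum_subset hsub (fun k hk hk2 => by
    have hik : i < k := by
      simp only [Finset.mem_range] at hk hk2; omega
    simp [Nat.choose_eq_zero_of_lt hik])]
  rw [← Finset.sum_add_distrib]
  refine Finset.sum_congr rfl fun k hk => ?_
  have hkm : k ≤ min (i+1) (j+1) := by simp only [Finset.mem_range] at hk; omega
  rcases k with _ | m
  · simp only [Nat.choose_zero_right, Nat.cast_one, one_mul, pow_zero, mul_one, Nat.sub_zero]
    rw [Nat.choose_eq_zero_of_lt (Nat.lt_succ_self i)]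
    rw [pow_succ]
    push_cast
    ring
  · have hmi : m ≤ i := by omega
    rw [Nat.choose_succ_succ' i m]
    simp only [Nat.succ_sub_succ]
    rw [Nat.choose_symm hmi]
    by_cases hc : m + 1 ≤ i
    · have h1 : i - m = (i - (m+1)) + 1 := by omega
      rw [h1, pow_succ]
      push_cast
      ring
    · have hmm : m = i := by omega
      subst hmm
      rw [Nat.choose_eq_zero_of_lt (Nat.lt_succ_self m)]
      push_cast
      ring

lemma B0 (x y : ℂ) (i j : ℕ) :
    dS x y (i+1) (j+1) = dS x y (i+1) j + x * aS x y i (j+1) := by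
  rw [dS, dS, aS, Finset.mul_sum]
  simp only [Nat.add_sub_cancel]
  rw [Finset.sum_range_succ' _ (min (i+1) (j+1+1)), Finset.sum_range_succ' _ (min (i+1) (j+1))]
  simp only [Nat.sub_zero, Nat.choose_eq_zero_of_lt (Nat.lt_succ_self i), Nat.cast_zero,
    zero_mul, add_zero]
  have hext : (∑ m ∈ Finset.range (min (i+1) (j+1)),
        (Nat.choose i (i + 1 - (m+1)) : ℂ) * (Nat.choose (j+1) (m+1) : ℂ)
          * x ^ (m+1) * y ^ (i + 1 - (m+1)))
      = ∑ m ∈ Finset.range (min (i+1) (j+1+1)),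
        (Nat.choose i (i + 1 - (m+1)) : ℂ) * (Nat.choose (j+1) (m+1) : ℂ)
          * x ^ (m+1) * y ^ (i + 1 - (m+1)) := by
    refine Finset.sum_subset (Finset.range_subset_range.mpr (by omega)) (fun m hm hm2 => ?_)
    have : j + 1 < m + 1 := by simp only [Finset.mem_range] at hm hm2; omega
    simp [Nat.choose_eq_zero_of_lt this]
  rw [hext]
  have hr : min i (j+1) + 1 = min (i+1) (j+1+1) := by omega
  rw [hr]
  rw [← Finset.sum_add_distrib]
  refine Finset.sum_congr rfl fun m hm => ?_
  have hmi : m ≤ i := by simp only [Finset.mem_range] at hm; omega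
  simp only [Nat.succ_sub_succ]
  rw [Nat.choose_symm hmi, Nat.choose_succ_succ' (j+1) m]
  push_cast
  ring

lemma C0 (n : ℕ) (x y z : ℂ) (i : ℕ) (hi : i + 1 ≤ n - 1) (hn : 2 ≤ n) :
    hS n x y z (i+1) = dS x y (i+1) (n-2) + x * gS n x y z i := by
  rw [hS, dS, gS, Finset.mul_sum]
  simp only [Nat.add_sub_cancel]
  have h1 : min (i+1) (n-2+1) + 1 = i + 1 + 1 := by omega
  have h2 : n - 2 + 1 = n - 1 := by omega
  rw [h1, h2]
  -- split off the l = 0 term of each inner sum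
  have main : ∀ k ∈ Finset.range (i+1+1),
      (∑ l ∈ Finset.range (k+1), (Nat.choose i (i+1-k) : ℂ) * (Nat.choose (n-l-1) (k-l) : ℂ)
          * x ^ k * y ^ (i+1-k) * z ^ l)
      = (∑ l ∈ Finset.range k, (Nat.choose i (i+1-k) : ℂ) * (Nat.choose (n-l-2) (k-l-1) : ℂ)
          * x ^ k * y ^ (i+1-k) * z ^ (l+1))
        + (Nat.choose i (i+1-k) : ℂ) * (Nat.choose (n-1) k : ℂ) * x ^ k * y ^ (i+1-k) := by
    intro k _
    have peel := Finset.sum_range_succ' (fun l => (Nat.choose i (i+1-k) : ℂ)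
      * (Nat.choose (n-l-1) (k-l) : ℂ) * x ^ k * y ^ (i+1-k) * z ^ l) k
    rw [peel]
    congr 1
    simp
  rw [Finset.sum_congr rfl main, Finset.sum_add_distrib, add_comm]
  congr 1
  · -- double-sum part equals x * gS part
    rw [Finset.sum_range_succ' _ (i+1)]
    simp only [Finset.range_zero, Finset.sum_empty, add_zero]
    refine Finset.sum_congr rfl fun m hm => ?_
    have hmi : m ≤ i := by simp only [Finset.mem_range] at hm; omega
    rw [Finset.mul_sum]
    simp only [Nat.succ_sub_succ]
    rw [Nat.choose_symm hmi]
    refine Finset.sum_congr rfl fun l _ => ?_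
    have e3 : m + 1 - l - 1 = m - l := by omega
    rw [e3]
    push_cast
    ring

lemma C2 (n : ℕ) (x y z : ℂ) (i : ℕ) (hi : i + 1 ≤ n - 1) (hn : 2 ≤ n) :
    gS n x y z (i+1) = z * hS n x y z (i+1) + (y - x) * gS n x y z i := by
  set R : ℂ := ∑ m ∈ Finset.range (i+1), ∑ l ∈ Finset.range (m+1),
      (Nat.choose i m : ℂ) * (Nat.choose (n-l-2) (m-l+1) : ℂ) * x^(m+1) * y^(i-m) * z^(l+1)
    with hR
  set T : ℂ := ∑ m ∈ Finset.range (i+1),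
      (Nat.choose i m : ℂ) * x^(m+1) * y^(i-m) * z^(m+2) with hT
  have part1 : z * hS n x y z (i+1) = x * gS n x y z i + (R + T) := by
    rw [hS, Finset.mul_sum]
    simp only [Nat.add_sub_cancel]
    have peelK := Finset.sum_range_succ' (fun k => z * ∑ l ∈ Finset.range (k+1),
      (Nat.choose i (i+1-k) : ℂ) * (Nat.choose (n-l-1) (k-l) : ℂ)
        * x^k * y^(i+1-k) * z^l) (i+1)
    rw [peelK]
    have hF0 : (z * ∑ l ∈ Finset.range (0+1), (Nat.choose i (i+1-0) : ℂ)
        * (Nat.choose (n-l-1) (0-l) : ℂ) * x^0 * y^(i+1-0) * z^l) = 0 := by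
      simp [Nat.choose_eq_zero_of_lt (Nat.lt_succ_self i)]
    rw [hF0, add_zero]
    have hm : ∀ m ∈ Finset.range (i+1),
        (z * ∑ l ∈ Finset.range (m+1+1), (Nat.choose i (i+1-(m+1)) : ℂ)
          * (Nat.choose (n-l-1) (m+1-l) : ℂ) * x^(m+1) * y^(i+1-(m+1)) * z^l)
        = (x * ∑ l ∈ Finset.range (m+1), (Nat.choose i m : ℂ) * (Nat.choose (n-l-2) (m-l) : ℂ)
            * x^m * y^(i-m) * z^(l+1))
          + ((∑ l ∈ Finset.range (m+1), (Nat.choose i m : ℂ) * (Nat.choose (n-l-2) (m-l+1) : ℂ)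
              * x^(m+1) * y^(i-m) * z^(l+1))
            + (Nat.choose i m : ℂ) * x^(m+1) * y^(i-m) * z^(m+2)) := by
      intro m hmem
      have hmi : m ≤ i := by simp only [Finset.mem_range] at hmem; omega
      simp only [Nat.succ_sub_succ]
      rw [Nat.choose_symm hmi]
      rw [Finset.mul_sum, Finset.sum_range_succ, Finset.mul_sum]
      have htop : z * ((Nat.choose i m : ℂ) * (Nat.choose (n-(m+1)-1) (m+1-(m+1)) : ℂ)
          * x^(m+1) * y^(i-m) * z^(m+1))
          = (Nat.choose i m : ℂ) * x^(m+1) * y^(i-m) * z^(m+2) := by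
        simp only [Nat.sub_self, Nat.choose_zero_right, Nat.cast_one, mul_one]
        ring
      rw [htop]
      have hmid : ∀ l ∈ Finset.range (m+1),
          z * ((Nat.choose i m : ℂ) * (Nat.choose (n-l-1) (m+1-l) : ℂ)
            * x^(m+1) * y^(i-m) * z^l)
          = x * ((Nat.choose i m : ℂ) * (Nat.choose (n-l-2) (m-l) : ℂ)
              * x^m * y^(i-m) * z^(l+1))
            + (Nat.choose i m : ℂ) * (Nat.choose (n-l-2) (m-l+1) : ℂ)
              * x^(m+1) * y^(i-m) * z^(l+1) := by
        intro l hl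
        have hlm : l ≤ m := by simp only [Finset.mem_range] at hl; omega
        have e1 : n - l - 1 = (n - l - 2) + 1 := by omega
        have e2 : m + 1 - l = (m - l) + 1 := by omega
        rw [e1, e2, Nat.choose_succ_succ']
        push_cast
        ring
      rw [Finset.sum_congr rfl hmid, Finset.sum_add_distrib]
      ring
    rw [Finset.sum_congr rfl hm, Finset.sum_add_distrib, Finset.sum_add_distrib]
    rw [gS, Finset.mul_sum]
  have part2 : gS n x y z (i+1) = y * gS n x y z i + (R + T) := by
    rw [gS]
    have peelK := Finset.sum_range_succ' (fun k => ∑ l ∈ Finset.range (k+1),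
      (Nat.choose (i+1) k : ℂ) * (Nat.choose (n-l-2) (k-l) : ℂ)
        * x^k * y^(i+1-k) * z^(l+1)) (i+1)
    rw [peelK]
    have hF0 : (∑ l ∈ Finset.range (0+1), (Nat.choose (i+1) 0 : ℂ)
        * (Nat.choose (n-l-2) (0-l) : ℂ) * x^0 * y^(i+1-0) * z^(l+1)) = y^(i+1) * z := by
      simp
    rw [hF0]
    have hm : ∀ m ∈ Finset.range (i+1),
        (∑ l ∈ Finset.range (m+1+1), (Nat.choose (i+1) (m+1) : ℂ)
          * (Nat.choose (n-l-2) (m+1-l) : ℂ) * x^(m+1) * y^(i+1-(m+1)) * z^(l+1))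
        = ((∑ l ∈ Finset.range (m+1), (Nat.choose i m : ℂ) * (Nat.choose (n-l-2) (m-l+1) : ℂ)
              * x^(m+1) * y^(i-m) * z^(l+1))
            + (Nat.choose i m : ℂ) * x^(m+1) * y^(i-m) * z^(m+2))
          + ∑ l ∈ Finset.range (m+1+1), (Nat.choose i (m+1) : ℂ)
              * (Nat.choose (n-l-2) (m+1-l) : ℂ) * x^(m+1) * y^(i+1-(m+1)) * z^(l+1) := by
      intro m hmem
      have hmi : m ≤ i := by simp only [Finset.mem_range] at hmem; omega
      have hsplit : ∀ l ∈ Finset.range (m+1+1),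
          (Nat.choose (i+1) (m+1) : ℂ) * (Nat.choose (n-l-2) (m+1-l) : ℂ)
            * x^(m+1) * y^(i+1-(m+1)) * z^(l+1)
          = (Nat.choose i m : ℂ) * (Nat.choose (n-l-2) (m+1-l) : ℂ)
              * x^(m+1) * y^(i+1-(m+1)) * z^(l+1)
            + (Nat.choose i (m+1) : ℂ) * (Nat.choose (n-l-2) (m+1-l) : ℂ)
              * x^(m+1) * y^(i+1-(m+1)) * z^(l+1) := by
        intro l _
        rw [Nat.choose_succ_succ' i m]
        push_cast
        ring
      rw [Finset.sum_congr rfl hsplit, Finset.sum_add_distrib]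
      congr 1
      simp only [Nat.succ_sub_succ]
      rw [Finset.sum_range_succ]
      congr 1
      · refine Finset.sum_congr rfl fun l hl => ?_
        have hlm : l ≤ m := by simp only [Finset.mem_range] at hl; omega
        have e2 : m + 1 - l = m - l + 1 := by omega
        rw [e2]
      · simp only [Nat.sub_self, Nat.choose_zero_right, Nat.cast_one, mul_one]
    rw [Finset.sum_congr rfl hm, Finset.sum_add_distrib]
    -- goal: (∑ (R_m + T_m) + ∑ B_m) + y^(i+1)*z = y * gS i + (R + T)
    rw [Finset.sum_add_distrib]
    have hB : (∑ m ∈ Finset.range (i+1), ∑ l ∈ Finset.range (m+1+1),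
        (Nat.choose i (m+1) : ℂ) * (Nat.choose (n-l-2) (m+1-l) : ℂ)
          * x^(m+1) * y^(i+1-(m+1)) * z^(l+1)) + y^(i+1) * z
        = y * gS n x y z i := by
      rw [gS, Finset.mul_sum]
      have peelK2 := Finset.sum_range_succ' (fun k => y * ∑ l ∈ Finset.range (k+1),
        (Nat.choose i k : ℂ) * (Nat.choose (n-l-2) (k-l) : ℂ)
          * x^k * y^(i-k) * z^(l+1)) i
      rw [peelK2]
      congr 1
      · -- ∑_{m ∈ range (i+1)} B_m = ∑_{m ∈ range i} y * inner (m+1)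
        rw [← Finset.sum_subset (Finset.range_subset_range.mpr (by omega : i ≤ i + 1))
          (fun m hm hm2 => by
            have : i < m + 1 := by simp only [Finset.mem_range] at hm hm2; omega
            simp [Nat.choose_eq_zero_of_lt this])]
        refine Finset.sum_congr rfl fun m hm => ?_
        have hmlt : m < i := by simp only [Finset.mem_range] at hm; omega
        rw [Finset.mul_sum]
        refine Finset.sum_congr rfl fun l _ => ?_
        simp only [Nat.succ_sub_succ]
        have e3 : i - m = (i - (m+1)) + 1 := by omega
        rw [e3, pow_succ]
        ring
      · -- y^(i+1) * z = y * (inner at 0)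
        simp [pow_succ]
        ring
    linear_combination hB
  linear_combination part2 - part1

lemma sum_two {n : ℕ} (a c : ℂ) (i : Fin n) (f : Fin n → ℂ) :
    ∑ k, ((if k = i then a else 0) + (if (i : ℕ) = (k : ℕ) + 1 then c else 0)) * f k
    = a * f i + c * (if _ : 0 < (i : ℕ) then
        f ⟨(i : ℕ) - 1, lt_of_le_of_lt (Nat.sub_le _ _) i.isLt⟩ else 0) := by
  simp only [add_mul, Finset.sum_add_distrib, ite_mul, zero_mul,
    Finset.sum_ite_eq', Finset.mem_univ, if_true]
  congr 1
  by_cases hi : 0 < (i : ℕ)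
  · rw [dif_pos hi]
    set i' : Fin n := ⟨(i : ℕ) - 1, lt_of_le_of_lt (Nat.sub_le _ _) i.isLt⟩ with hi'
    have hcond : ∀ k : Fin n, ((i : ℕ) = (k : ℕ) + 1) ↔ (k = i') := by
      intro k; rw [Fin.ext_iff]; simp only [hi']; omega
    calc (∑ k : Fin n, if (i : ℕ) = (k : ℕ) + 1 then c * f k else 0)
        = ∑ k : Fin n, (if k = i' then c * f k else 0) := by
          refine Finset.sum_congr rfl fun k _ => ?_
          rw [if_congr (hcond k) rfl rfl]
      _ = c * f i' := by rw [Finset.sum_ite_eq', if_pos (Finset.mem_univ _)]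
  · rw [dif_neg hi, mul_zero]
    refine Finset.sum_eq_zero fun k _ => ?_
    have : ¬((i : ℕ) = (k : ℕ) + 1) := by omega
    simp [this]

lemma MASMz_apply_last {n : ℕ} (x y z ω : ℂ) (i j : Fin n) (hj : (j : ℕ) = n - 1) :
    MASMz n x y z ω i j
      = (1 - ω) * (if (i : ℕ) = (j : ℕ) then 1 else 0) + ω * gS n x y z i := by
  simp only [MASMz, Matrix.of_apply, if_pos hj, Fin.ext_iff, gS]

lemma MASMz_apply_bulk {n : ℕ} (x y z ω : ℂ) (i j : Fin n) (hj : ¬ (j : ℕ) = n - 1) :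
    MASMz n x y z ω i j
      = (1 - ω) * (if (i : ℕ) = (j : ℕ) then 1 else 0) + ω * aS x y i j := by
  simp only [MASMz, Matrix.of_apply, if_neg hj, Fin.ext_iff, aS]

lemma MDPPz_apply_last {n : ℕ} (x y z ω : ℂ) (i j : Fin n) (hj : (j : ℕ) = n - 1) :
    MDPPz n x y z ω i j = (1 + ω * (z - 1)) * hS n x y z i := by
  simp only [MDPPz, Matrix.of_apply, if_pos hj, hS]

lemma MDPPz_apply_bulk {n : ℕ} (x y z ω : ℂ) (i j : Fin n) (hj : ¬ (j : ℕ) = n - 1) :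
    MDPPz n x y z ω i j
      = -(if (i : ℕ) = (j : ℕ) + 1 then 1 else 0) + dS x y i j := by
  simp only [MDPPz, Matrix.of_apply, if_neg hj, dS]

/-- Proposition 3.3: det M_ASM(n,x,y,z) = det M_DPP(n,x,y,z). -/
theorem det_MASMz_eq_det_MDPPz (n : ℕ) (hn : 0 < n) (x y z ω : ℂ)
    (hω : y * ω ^ 2 + (1 - x - y) * ω + x = 0) :
    (MASMz n x y z ω).det = (MDPPz n x y z ω).det := by
  have hω1 : (1 : ℂ) - ω ≠ 0 := by
    intro h
    have hω' : ω = 1 := by linear_combination -h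
    rw [hω'] at hω
    have : (1 : ℂ) = 0 := by linear_combination hω
    exact one_ne_zero this
  set P : Matrix (Fin n) (Fin n) ℂ := Matrix.of fun i k =>
    (if k = i then 1 - ω else 0) + (if (i : ℕ) = (k : ℕ) + 1 then (-1 : ℂ) else 0) with hP
  set Q : Matrix (Fin n) (Fin n) ℂ := Matrix.of fun k j =>
    (if k = j then 1 - ω else 0) + (if (j : ℕ) = (k : ℕ) + 1 then -(1 - ω)^2 else 0) with hQ
  have hPdet : P.det = (1 - ω) ^ n := by
    rw [Matrix.det_of_lowerTriangular P (fun i j hij => by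
      have h1 : i < j := OrderDual.toDual_lt_toDual.mp hij
      have h2 : ¬ (j = i) := by intro h; rw [h] at h1; exact lt_irrefl _ h1
      have h3 : ¬ ((i : ℕ) = (j : ℕ) + 1) := by
        have := Fin.lt_def.mp h1; omega
      simp [hP, h2, h3])]
    calc ∏ i : Fin n, P i i = ∏ _i : Fin n, (1 - ω) := by
          refine Finset.prod_congr rfl fun i _ => ?_
          have h4 : ¬ ((i : ℕ) = (i : ℕ) + 1) := by omega
          simp [hP, h4]
      _ = (1 - ω) ^ n := by
          rw [Finset.prod_const, Finset.card_univ, Fintype.card_fin]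
  have hQdet : Q.det = (1 - ω) ^ n := by
    rw [Matrix.det_of_upperTriangular (show Q.BlockTriangular id from fun k j hkj => by
      have h1 : j < k := hkj
      have h2 : ¬ (k = j) := by intro h; rw [h] at h1; exact lt_irrefl _ h1
      have h3 : ¬ ((j : ℕ) = (k : ℕ) + 1) := by
        have := Fin.lt_def.mp h1; omega
      simp [hQ, h2, h3])]
    calc ∏ i : Fin n, Q i i = ∏ _i : Fin n, (1 - ω) := by
          refine Finset.prod_congr rfl fun i _ => ?_
          have h4 : ¬ ((i : ℕ) = (i : ℕ) + 1) := by omega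
          simp [hQ, h4]
      _ = (1 - ω) ^ n := by
          rw [Finset.prod_const, Finset.card_univ, Fintype.card_fin]
  have key : P * MASMz n x y z ω = MDPPz n x y z ω * Q := by
    ext i j
    rw [Matrix.mul_apply, Matrix.mul_apply]
    have hL := sum_two (n := n) (1 - ω) (-1 : ℂ) i (fun k => MASMz n x y z ω k j)
    have hR := sum_two (n := n) (1 - ω) (-(1 - ω)^2) j (fun k => MDPPz n x y z ω i k)
    simp only [hP, hQ, Matrix.of_apply]
    have hRc : (∑ k, MDPPz n x y z ω i k *
          ((if k = j then 1 - ω else 0) + (if (j : ℕ) = (k : ℕ) + 1 then -(1 - ω)^2 else 0)))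
        = ∑ k, ((if k = j then 1 - ω else 0) +
            (if (j : ℕ) = (k : ℕ) + 1 then -(1 - ω)^2 else 0)) * MDPPz n x y z ω i k :=
      Finset.sum_congr rfl fun k _ => mul_comm _ _
    rw [hRc, hL, hR]
    have hmkI : ((⟨(i : ℕ) - 1, lt_of_le_of_lt (Nat.sub_le _ _) i.isLt⟩ : Fin n) : ℕ)
        = (i : ℕ) - 1 := rfl
    have hmkJ : ((⟨(j : ℕ) - 1, lt_of_le_of_lt (Nat.sub_le _ _) j.isLt⟩ : Fin n) : ℕ)
        = (j : ℕ) - 1 := rfl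
    by_cases hjn : (j : ℕ) = n - 1
    · -- last column
      rw [MASMz_apply_last x y z ω i j hjn, MDPPz_apply_last x y z ω i j hjn]
      by_cases hi : 0 < (i : ℕ)
      · rw [dif_pos hi]
        have hn2 : 2 ≤ n := by have := i.isLt; omega
        have hj0 : 0 < (j : ℕ) := by omega
        rw [dif_pos hj0]
        rw [MASMz_apply_last x y z ω _ j hjn]
        rw [MDPPz_apply_bulk x y z ω i _ (by show ¬ ((j:ℕ) - 1 = n - 1); omega)]
        simp only [hmkI, hmkJ]
        obtain ⟨i', hi'⟩ : ∃ i', (i : ℕ) = i' + 1 := ⟨(i : ℕ) - 1, by omega⟩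
        have hii : i' + 1 ≤ n - 1 := by have := i.isLt; omega
        simp only [hi', hjn]
        simp only [Nat.add_sub_cancel]
        have hnn : n - 1 - 1 = n - 2 := by omega
        simp only [hnn]
        have hnn2 : n - 2 + 1 = n - 1 := by omega
        simp only [hnn2]
        have hC0' := C0 n x y z i' hii hn2
        have hC2' := C2 n x y z i' hii hn2
        have hd2 : (if i' = n - 1 then (1:ℂ) else 0) = 0 := by
          rw [if_neg (by omega)]
        rw [hd2]
        linear_combination ((1 - ω) * ω) * hC2' - (1 - ω)^2 * hC0' - gS n x y z i' * hω
      · rw [dif_neg hi]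
        have hi0 : (i : ℕ) = 0 := by omega
        simp only [hi0]
        rw [gS_zero, hS_zero]
        by_cases hj0 : 0 < (j : ℕ)
        · rw [dif_pos hj0]
          rw [MDPPz_apply_bulk x y z ω i _ (by show ¬ ((j:ℕ) - 1 = n - 1); omega)]
          simp only [hmkJ, hi0]
          rw [dS_zero']
          rw [if_neg (by omega : ¬ ((0:ℕ) = (j:ℕ))),
            if_neg (by omega : ¬ ((0:ℕ) = (j:ℕ) - 1 + 1))]
          ring
        · rw [dif_neg hj0]
          rw [if_pos (by omega : (0:ℕ) = (j:ℕ))]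
          ring
    · -- bulk column
      have hjlt : (j : ℕ) < n - 1 := by have := j.isLt; omega
      rw [MASMz_apply_bulk x y z ω i j hjn, MDPPz_apply_bulk x y z ω i j hjn]
      by_cases hi : 0 < (i : ℕ)
      · rw [dif_pos hi, MASMz_apply_bulk x y z ω _ j hjn]
        simp only [hmkI]
        obtain ⟨i', hi'⟩ : ∃ i', (i : ℕ) = i' + 1 := ⟨(i : ℕ) - 1, by omega⟩
        simp only [hi']
        simp only [Nat.add_sub_cancel]
        by_cases hj0 : 0 < (j : ℕ)
        · rw [dif_pos hj0]
          rw [MDPPz_apply_bulk x y z ω i _ (by show ¬ ((j:ℕ) - 1 = n - 1); omega)]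
          simp only [hmkJ, hi']
          obtain ⟨j', hj'⟩ : ∃ j', (j : ℕ) = j' + 1 := ⟨(j : ℕ) - 1, by omega⟩
          simp only [hj']
          simp only [Nat.add_sub_cancel]
          have hB2' := B2 x y i' j'
          have hB0' := B0 x y i' j'
          have hd2 : (if i' + 1 = j' + 1 + 1 then (1:ℂ) else 0)
              = (if i' = j' + 1 then (1:ℂ) else 0) := by
            by_cases h : i' = j' + 1
            · rw [if_pos h, if_pos (by omega)]
            · rw [if_neg h, if_neg (by omega)]
          rw [hd2]
          linear_combination ((1 - ω) * ω) * hB2' - (1 - ω) * hB0'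
            - aS x y i' (j' + 1) * hω
        · rw [dif_neg hj0]
          have hj00 : (j : ℕ) = 0 := by omega
          simp only [hj00]
          rw [aS_zero, aS_zero, dS_zero]
          rw [if_neg (by omega : ¬ (i' + 1 = 0))]
          have hd2 : (if i' + 1 = 0 + 1 then (1:ℂ) else 0)
              = (if i' = 0 then (1:ℂ) else 0) := by
            by_cases h : i' = 0
            · rw [if_pos (by omega), if_pos h]
            · rw [if_neg (by omega), if_neg h]
          rw [hd2]
          linear_combination (-(y ^ i')) * hω
      · rw [dif_neg hi]
        have hi0 : (i : ℕ) = 0 := by omega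
        simp only [hi0]
        rw [aS_zero', dS_zero']
        rw [if_neg (by omega : ¬ ((0:ℕ) = (j:ℕ) + 1))]
        by_cases hj0 : 0 < (j : ℕ)
        · rw [dif_pos hj0]
          rw [MDPPz_apply_bulk x y z ω i _ (by show ¬ ((j:ℕ) - 1 = n - 1); omega)]
          simp only [hmkJ, hi0]
          rw [dS_zero']
          rw [if_neg (by omega : ¬ ((0:ℕ) = (j:ℕ))),
            if_neg (by omega : ¬ ((0:ℕ) = (j:ℕ) - 1 + 1))]
          ring
        · rw [dif_neg hj0]
          rw [if_pos (by omega : (0:ℕ) = (j:ℕ))]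
          ring
  have hd := congrArg Matrix.det key
  rw [Matrix.det_mul, Matrix.det_mul, hPdet, hQdet] at hd
  exact mul_left_cancel₀ (pow_ne_zero n hω1) (hd.trans (mul_comm _ _))
end

section
/- Let R be a commutative ring, n a positive integer, and A an n×n matrix over R (indexed by 1 ≤ i,j ≤ n) such that there is an element c of R with ∑_{j=1}^n A_{i j} = c for every row i and ∑_{i=1}^n A_{i j} = c for every column j. Then ∑_{1≤i<i'≤n, 1≤j'≤j≤n} A_{i j} A_{i' j'} = ∑_{1≤i≤i'≤n, 1≤j'<j≤n} A_{i j} A_{i' j'}. -/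
open Finset Matrix

/-- For a square matrix over a commutative ring all of whose row sums and column sums
equal a common value c, ∑_{i<i', j'≤j} A_{i j} A_{i' j'} = ∑_{i≤i', j'<j} A_{i j} A_{i' j'}. -/
theorem sum_lt_le_eq_sum_le_lt {R : Type*} [CommRing R] (n : ℕ) (hn : 0 < n)
    (A : Matrix (Fin n) (Fin n) R) (c : R)
    (hrow : ∀ i, ∑ j, A i j = c) (hcol : ∀ j, ∑ i, A i j = c) :
    (∑ i : Fin n, ∑ i' : Fin n, ∑ j : Fin n, ∑ j' : Fin n,
        if i < i' ∧ j' ≤ j then A i j * A i' j' else 0) =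
      (∑ i : Fin n, ∑ i' : Fin n, ∑ j : Fin n, ∑ j' : Fin n,
        if i ≤ i' ∧ j' < j then A i j * A i' j' else 0) := by
  -- swap the two pairs of sums
  have swap4 : ∀ (f : Fin n → Fin n → Fin n → Fin n → R),
      (∑ i : Fin n, ∑ i' : Fin n, ∑ j : Fin n, ∑ j' : Fin n, f i i' j j')
        = ∑ j : Fin n, ∑ j' : Fin n, ∑ i : Fin n, ∑ i' : Fin n, f i i' j j' := by
    intro f
    have h1 : ∀ i : Fin n, (∑ i' : Fin n, ∑ j : Fin n, ∑ j' : Fin n, f i i' j j')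
        = ∑ j : Fin n, ∑ i' : Fin n, ∑ j' : Fin n, f i i' j j' := fun i => Finset.sum_comm
    simp_rw [h1]
    rw [Finset.sum_comm]
    refine Finset.sum_congr rfl fun j _ => ?_
    have h2 : ∀ i : Fin n, (∑ i' : Fin n, ∑ j' : Fin n, f i i' j j')
        = ∑ j' : Fin n, ∑ i' : Fin n, f i i' j j' := fun i => Finset.sum_comm
    simp_rw [h2]
    exact Finset.sum_comm
  set V : R := ∑ i : Fin n, ∑ i' : Fin n, ∑ j : Fin n, ∑ j' : Fin n,
      if i < i' ∧ j < j' then A i j * A i' j' else 0 with hV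
  set W : R := ∑ i : Fin n, ∑ i' : Fin n, ∑ j : Fin n, ∑ j' : Fin n,
      if i' < i ∧ j' < j then A i j * A i' j' else 0 with hW
  have hVW : V = W := by
    rw [hW, Finset.sum_comm]
    refine Finset.sum_congr rfl fun i' _ => Finset.sum_congr rfl fun i _ => ?_
    rw [Finset.sum_comm]
    refine Finset.sum_congr rfl fun j' _ => Finset.sum_congr rfl fun j _ => ?_
    rw [mul_comm]
  have h1 : (∑ i : Fin n, ∑ i' : Fin n, ∑ j : Fin n, ∑ j' : Fin n,
        if i < i' ∧ j' ≤ j then A i j * A i' j' else 0) + V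
      = ∑ i : Fin n, ∑ i' : Fin n, if i < i' then c * c else 0 := by
    rw [hV]
    simp_rw [← Finset.sum_add_distrib]
    refine Finset.sum_congr rfl fun i _ => Finset.sum_congr rfl fun i' _ => ?_
    by_cases h : i < i'
    · simp only [h, true_and]
      have hpt : ∀ j j' : Fin n,
          ((if j' ≤ j then A i j * A i' j' else 0) + if j < j' then A i j * A i' j' else 0)
            = A i j * A i' j' := by
        intro j j'
        rcases le_or_gt j' j with hj | hj
        · simp [hj, not_lt.mpr hj]
        · simp [hj, not_le.mpr hj]
      simp_rw [hpt]
      rw [← Finset.sum_mul_sum, hrow, hrow, if_pos trivial]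
    · simp [h]
  have h2 : (∑ i : Fin n, ∑ i' : Fin n, ∑ j : Fin n, ∑ j' : Fin n,
        if i ≤ i' ∧ j' < j then A i j * A i' j' else 0) + W
      = ∑ j : Fin n, ∑ j' : Fin n, if j' < j then c * c else 0 := by
    rw [hW]
    simp_rw [← Finset.sum_add_distrib]
    have hpt : ∀ i i' j j' : Fin n,
        ((if i ≤ i' ∧ j' < j then A i j * A i' j' else 0)
          + if i' < i ∧ j' < j then A i j * A i' j' else 0)
          = if j' < j then A i j * A i' j' else 0 := by
      intro i i' j j'
      rcases le_or_gt i i' with hi | hi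
      · by_cases hj : j' < j <;> simp [hi, hj, not_lt.mpr hi]
      · by_cases hj : j' < j <;> simp [hi, hj, not_le.mpr hi]
    simp_rw [hpt]
    rw [swap4]
    refine Finset.sum_congr rfl fun j _ => Finset.sum_congr rfl fun j' _ => ?_
    by_cases h : j' < j
    · simp only [h, if_true]
      rw [← Finset.sum_mul_sum, hcol, hcol]
    · simp [h]
  have h3 : (∑ i : Fin n, ∑ i' : Fin n, if i < i' then c * c else 0)
      = ∑ j : Fin n, ∑ j' : Fin n, if j' < j then c * c else 0 := Finset.sum_comm
  have hfin : (∑ i : Fin n, ∑ i' : Fin n, ∑ j : Fin n, ∑ j' : Fin n,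
        if i < i' ∧ j' ≤ j then A i j * A i' j' else 0) + V
      = (∑ i : Fin n, ∑ i' : Fin n, ∑ j : Fin n, ∑ j' : Fin n,
        if i ≤ i' ∧ j' < j then A i j * A i' j' else 0) + V := by
    rw [h1, h3, ← h2, hVW]
  exact add_right_cancel hfin
end

section
/- Let R be a commutative ring, n a positive integer, A an n×n matrix over R with rows and columns indexed by 0 ≤ i,j ≤ n−1, and S the n×n matrix with S_{i j} = δ_{i,j+1}. Then det(A−S) = ∑_{T ⊆ {1,…,n−1}} det A_{{0}∪T, (T−1)∪{n−1}}, where T−1 = {t−1 : t ∈ T} and A_{{0}∪T, (T−1)∪{n−1}} denotes the square submatrix of A obtained by restricting the rows to those indexed by {0}∪T and the columns to those indexed by (T−1)∪{n−1}, each taken in increasing order. -/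
/-!
Expand `det (A + (-S))` multilinearly in the rows: each subset `s` of rows taken from `A`
contributes `det` of the matrix whose other rows `u` are those of `-S`, namely `-e_{u-1}`.
Row `0` of `S` vanishes, so only `s = {0} ∪ T` contribute. Laplace expansion along the rows
`u ∉ s` deletes columns `u - 1`, leaving rows `{0} ∪ T` and columns `(T - 1) ∪ {n - 1}`; each
expansion contributes `(-1)^(u + (u - 1)) · (-1) = 1`.
-/

open Finset Matrix

theorem Finset.sum_eq_sum_powerset_insert_of_notMem {α M : Type*} [Fintype α] [DecidableEq α]
    [AddCommMonoid M] {z : α} {W : Finset α} (hW : insert z W = univ) (hzW : z ∉ W)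
    (g : Finset α → M) (hg : ∀ s, z ∉ s → g s = 0) :
    ∑ s, g s = ∑ T ∈ W.powerset, g (insert z T) := by
  rw [← powerset_univ, ← hW, sum_powerset_insert hzW,
    sum_eq_zero fun T hT => hg T fun hz => hzW (mem_powerset.1 hT hz), zero_add]

namespace Finset

variable {α : Type*} [LinearOrder α] {k : ℕ}

theorem card_filter_lt_orderEmbOfFin (t : Finset α) (h : #t = k) (i : Fin k) :
    #{y ∈ t | y < t.orderEmbOfFin h i} = i := by
  have : {y ∈ t | y < t.orderEmbOfFin h i} = (Iio i).map (t.orderEmbOfFin h).toEmbedding := by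
    ext y
    simp only [mem_filter, mem_map, mem_Iio, RelEmbedding.coe_toEmbedding]
    constructor
    · rintro ⟨hy, hlt⟩
      obtain ⟨j, rfl⟩ : y ∈ Set.range (t.orderEmbOfFin h) := by
        rwa [range_orderEmbOfFin]
      exact ⟨j, (t.orderEmbOfFin h).lt_iff_lt.mp hlt, rfl⟩
    · rintro ⟨j, hj, rfl⟩
      exact ⟨orderEmbOfFin_mem t h j, (t.orderEmbOfFin h).lt_iff_lt.mpr hj⟩
  rw [this, card_map, Fin.card_Iio]

theorem orderEmbOfFin_erase {t t' : Finset α} (h : #t = k + 1) (h' : #t' = k) (i : Fin (k + 1))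
    (ht' : t.erase (t.orderEmbOfFin h i) = t') :
    ⇑(t'.orderEmbOfFin h') = t.orderEmbOfFin h ∘ i.succAbove := by
  subst ht'
  refine (orderEmbOfFin_unique h' (fun x => ?_) ((t.orderEmbOfFin h).strictMono.comp
    (Fin.strictMono_succAbove i))).symm
  simp [orderEmbOfFin_mem, Fin.succAbove_ne]

theorem sort_getD_eq_orderEmbOfFin (s : Finset α) (h : #s = k) (i : Fin k) (d : α) :
    (s.sort (· ≤ ·)).getD i d = s.orderEmbOfFin h i := by
  rw [List.getD_eq_getElem _ _ (by rw [length_sort, h]; exact i.isLt)]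
  rfl

theorem exists_orderEmbOfFin_eq_of_forall_lt_mem {n : ℕ} {t : Finset (Fin n)} (h : #t = k)
    {a : Fin n} (ha : a ∈ t) (hlt : ∀ x < a, x ∈ t) :
    ∃ i : Fin k, t.orderEmbOfFin h i = a ∧ (i : ℕ) = a := by
  obtain ⟨i, hi⟩ : a ∈ Set.range (t.orderEmbOfFin h) := by rwa [range_orderEmbOfFin]
  refine ⟨i, hi, ?_⟩
  rw [← card_filter_lt_orderEmbOfFin t h i, hi, ← Fin.card_Iio a]
  congr 1
  ext x
  simpa using hlt x

end Finset

namespace Fin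

variable {n : ℕ} {f : Fin n → Fin n}

theorem mem_image_iff_of_val_eq_sub_one (hf : ∀ t, (f t : ℕ) = t - 1) {V : Finset (Fin n)}
    (hV : ∀ v ∈ V, (v : ℕ) ≠ 0) (j : Fin n) :
    j ∈ V.image f ↔ ∃ v ∈ V, (v : ℕ) = j + 1 := by
  simp only [mem_image, Fin.ext_iff, hf]
  exact exists_congr fun v => and_congr_right fun hv => by have := hV v hv; omega

theorem strictMonoOn_of_val_eq_sub_one (hf : ∀ t, (f t : ℕ) = t - 1) :
    StrictMonoOn f {t | (t : ℕ) ≠ 0} := by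
  intro a ha b _ hab
  rw [Fin.lt_def] at hab ⊢
  rw [hf, hf]
  exact Nat.sub_lt_sub_right (Nat.pos_of_ne_zero ha) hab

theorem val_ne_zero_of_mem_compl_insert {z u : Fin n} {T : Finset (Fin n)}
    (hz : (z : ℕ) = 0) (hu : u ∈ (insert z T)ᶜ) : (u : ℕ) ≠ 0 := fun hu0 =>
  mem_compl.1 hu (Fin.ext (hu0.trans hz.symm) ▸ mem_insert_self z T)

theorem compl_image_compl_insert_of_val_eq_sub_one (hf : ∀ t, (f t : ℕ) = t - 1) {z w : Fin n}
    (hz : (z : ℕ) = 0) (hw : (w : ℕ) = n - 1) {T : Finset (Fin n)}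
    (hT : ∀ t ∈ T, (t : ℕ) ≠ 0) :
    ((insert z T)ᶜ.image f)ᶜ = insert w (T.image f) := by
  ext j
  simp only [mem_compl, mem_insert,
    mem_image_iff_of_val_eq_sub_one hf fun _ => val_ne_zero_of_mem_compl_insert hz,
    mem_image_iff_of_val_eq_sub_one hf hT, Fin.ext_iff, hz, hw, not_exists, not_and, not_or]
  constructor
  · intro h
    by_contra! hj
    have := j.isLt
    exact h ⟨j + 1, by omega⟩ ⟨by simp, fun hv => hj.2 _ hv rfl⟩ rfl
  · rintro (hj | ⟨v, hv, hvj⟩) x ⟨-, hxT⟩ hxj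
    · have := x.isLt
      omega
    · exact hxT (Fin.ext (hxj.trans hvj.symm) ▸ hv)

end Fin

namespace Matrix

theorem det_add_eq_sum_det_piecewise {n R : Type*} [Fintype n] [DecidableEq n]
    [CommRing R] (A B : Matrix n n R) :
    (A + B).det = ∑ s : Finset n, (of (s.piecewise A B)).det :=
  (detRowAlternating : (n → R) [⋀^n]→ₗ[R] R).toMultilinearMap.map_add_univ A B

theorem det_eq_of_row_eq_single {R : Type*} [CommRing R] {k : ℕ}
    (N : Matrix (Fin (k + 1)) (Fin (k + 1)) R) {i j : Fin (k + 1)} {x : R}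
    (h : N i = Pi.single j x) :
    N.det = (-1) ^ (i + j : ℕ) * x * (N.submatrix i.succAbove j.succAbove).det := by
  rw [det_succ_row N i, sum_eq_single j (fun j' _ hj' => by simp [h, hj'])
    (fun hj => (hj (mem_univ j)).elim), h, Pi.single_eq_same]

theorem det_submatrix_orderEmbOfFin_of_row_eq_single {R : Type*} [CommRing R] {n p : ℕ}
    (M : Matrix (Fin n) (Fin n) R) {t t' v v' : Finset (Fin n)} {a b : Fin n} {x : R}
    (ht : #t = p + 1) (hv : #v = p + 1) (ht' : #t' = p) (hv' : #v' = p)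
    (ha : a ∈ t) (hb : b ∈ v) (hat : ∀ y < a, y ∈ t) (hbv : ∀ y < b, y ∈ v)
    (hM : M a = Pi.single b x) (hta : t.erase a = t') (hvb : v.erase b = v') :
    (M.submatrix (t.orderEmbOfFin ht) (v.orderEmbOfFin hv)).det =
      (-1) ^ (a + b : ℕ) * x *
        (M.submatrix (t'.orderEmbOfFin ht') (v'.orderEmbOfFin hv')).det := by
  obtain ⟨i, hi, hia⟩ := exists_orderEmbOfFin_eq_of_forall_lt_mem ht ha hat
  obtain ⟨j, hj, hjb⟩ := exists_orderEmbOfFin_eq_of_forall_lt_mem hv hb hbv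
  have hrow : M.submatrix (t.orderEmbOfFin ht) (v.orderEmbOfFin hv) i = Pi.single j x := by
    funext y
    simp only [submatrix_apply, hi, hM, Pi.single_apply, ← hj,
      (orderEmbOfFin _ hv).injective.eq_iff]
  rw [det_eq_of_row_eq_single _ hrow, submatrix_submatrix, hia, hjb,
    orderEmbOfFin_erase ht ht' i (hi ▸ hta), orderEmbOfFin_erase hv hv' j (hj ▸ hvb)]

theorem det_eq_prod_mul_det_submatrix_compl {R : Type*} [CommRing R] {n : ℕ}
    (M : Matrix (Fin n) (Fin n) R) (U : Finset (Fin n)) (f : Fin n → Fin n) (c : Fin n → R)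
    (hf : StrictMonoOn f U) (hM : ∀ u ∈ U, M u = Pi.single (f u) (c u)) {p : ℕ}
    (h₁ : #Uᶜ = p) (h₂ : #(U.image f)ᶜ = p) :
    M.det = (∏ u ∈ U, (-1) ^ (u + f u : ℕ) * c u) *
      (M.submatrix (Uᶜ.orderEmbOfFin h₁) ((U.image f)ᶜ.orderEmbOfFin h₂)).det := by
  -- Removing the least row `a` of `U` keeps row `a` and column `f a` at positions `a` and `f a`
  -- of the remaining index sets, so the Laplace sign is `(-1) ^ (a + f a)`.
  induction U using Finset.induction_on_min generalizing p with
  | empty =>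
    obtain rfl : p = n := by simpa using h₁.symm
    have hid (t : Finset (Fin p)) (ht : t = ∅) (h : #tᶜ = p) : ⇑(tᶜ.orderEmbOfFin h) = id :=
      (orderEmbOfFin_unique h (by simp [ht]) strictMono_id).symm
    rw [hid _ rfl, hid _ (image_empty f), submatrix_id_id, prod_empty, one_mul]
  | insert a s has ih =>
    have has' : a ∉ s := fun ha => lt_irrefl a (has a ha)
    have hfs : ∀ x ∈ s, f a < f x := fun x hx =>
      hf (mem_insert_self a s) (mem_insert_of_mem hx) (has x hx)
    have hfa : f a ∉ s.image f := by
      simp only [mem_image, not_exists, not_and]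
      exact fun x hx hxa => (hfs x hx).ne' hxa
    have hrows : sᶜ.erase a = (insert a s)ᶜ := (compl_insert ..).symm
    have hcols : (s.image f)ᶜ.erase (f a) = ((insert a s).image f)ᶜ := by
      rw [image_insert, compl_insert]
    have h₁' : #sᶜ = p + 1 := by rw [← card_erase_add_one (mem_compl.2 has'), hrows, h₁]
    have h₂' : #(s.image f)ᶜ = p + 1 := by
      rw [← card_erase_add_one (mem_compl.2 hfa), hcols, h₂]
    have hrows_lt : ∀ y < a, y ∈ sᶜ := fun y hy =>
      mem_compl.2 fun hys => (has y hys).not_gt hy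
    have hcols_lt : ∀ y < f a, y ∈ (s.image f)ᶜ := fun y hy => mem_compl.2 fun hys => by
      obtain ⟨x, hx, rfl⟩ := mem_image.1 hys
      exact (hfs x hx).not_gt hy
    rw [ih (hf.mono (subset_insert a s)) (fun u hu => hM u (mem_insert_of_mem hu)) h₁' h₂',
      det_submatrix_orderEmbOfFin_of_row_eq_single M h₁' h₂' h₁ h₂ (mem_compl.2 has')
        (mem_compl.2 hfa) hrows_lt hcols_lt (hM a (mem_insert_self a s)) hrows hcols,
      prod_insert has']
    ring

def lowerShift (n : ℕ) (R : Type*) [Zero R] [One R] : Matrix (Fin n) (Fin n) R :=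
  of fun i j => if (i : ℕ) = j + 1 then 1 else 0

section lowerShift

variable {R : Type*} [CommRing R] {n : ℕ} {f : Fin n → Fin n}

theorem lowerShift_row_zero {z : Fin n} (hz : (z : ℕ) = 0) : lowerShift n R z = 0 := by
  funext j
  simp [lowerShift, hz]

theorem neg_lowerShift_row (hf : ∀ t, (f t : ℕ) = t - 1) {u : Fin n} (hu : (u : ℕ) ≠ 0) :
    (-lowerShift n R) u = Pi.single (f u) (-1) := by
  funext j
  simp only [lowerShift, neg_apply, of_apply, Pi.single_apply, Fin.ext_iff, hf]
  split_ifs <;> first | omega | simp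

theorem det_piecewise_neg_lowerShift_eq_zero (A : Matrix (Fin n) (Fin n) R) {z : Fin n}
    (hz : (z : ℕ) = 0) {s : Finset (Fin n)} (hs : z ∉ s) :
    (of (s.piecewise A (-lowerShift n R))).det = 0 :=
  det_eq_zero_of_row_eq_zero z fun j => by
    simp [Finset.piecewise, hs, lowerShift_row_zero hz]

theorem det_piecewise_neg_lowerShift (A : Matrix (Fin n) (Fin n) R)
    (hf : ∀ t, (f t : ℕ) = t - 1) {z w : Fin n} (hz : (z : ℕ) = 0) (hw : (w : ℕ) = n - 1)
    {T : Finset (Fin n)} (hT : ∀ t ∈ T, (t : ℕ) ≠ 0) :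
    (of ((insert z T).piecewise A (-lowerShift n R))).det =
      (of fun a b : Fin (#T + 1) => A (((insert z T).sort (· ≤ ·)).getD a z)
        (((insert w (T.image f)).sort (· ≤ ·)).getD b z)).det := by
  have hU : ∀ u ∈ (insert z T)ᶜ, (u : ℕ) ≠ 0 := fun _ =>
    Fin.val_ne_zero_of_mem_compl_insert hz
  have hmono : StrictMonoOn f ↑(insert z T)ᶜ :=
    (Fin.strictMonoOn_of_val_eq_sub_one hf).mono hU
  have h₁ : #(insert z T)ᶜᶜ = #T + 1 := by
    rw [compl_compl]
    exact card_insert_of_notMem fun h => hT z h hz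
  have h₂ : #((insert z T)ᶜ.image f)ᶜ = #T + 1 := by
    rw [card_compl, card_image_of_injOn hmono.injOn, ← card_compl, h₁]
  have hrow (a : Fin (#T + 1)) :
      ((insert z T).sort (· ≤ ·)).getD a z = (insert z T)ᶜᶜ.orderEmbOfFin h₁ a := by
    rw [← sort_getD_eq_orderEmbOfFin _ h₁ a z, compl_compl]
  have hcol (b : Fin (#T + 1)) : ((insert w (T.image f)).sort (· ≤ ·)).getD b z =
      ((insert z T)ᶜ.image f)ᶜ.orderEmbOfFin h₂ b := by
    rw [← sort_getD_eq_orderEmbOfFin _ h₂ b z,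
      Fin.compl_image_compl_insert_of_val_eq_sub_one hf hz hw hT]
  rw [det_eq_prod_mul_det_submatrix_compl (of ((insert z T).piecewise A (-lowerShift n R))) _ f
    (fun _ => -1) hmono (fun u hu => (piecewise_eq_of_notMem _ _ _ (mem_compl.1 hu)).trans
      (neg_lowerShift_row hf (hU u hu)))
    h₁ h₂, prod_eq_one, one_mul]
  · congr 1
    ext a b
    simp only [hrow, hcol, submatrix_apply, of_apply]
    have hmem : (insert z T)ᶜᶜ.orderEmbOfFin h₁ a ∈ insert z T := by
      simpa only [compl_compl] using orderEmbOfFin_mem _ h₁ a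
    exact congrFun (piecewise_eq_of_mem _ _ _ hmem) _
  · intro u hu
    rw [hf, Odd.neg_one_pow ⟨u - 1, by have := hU u hu; omega⟩]
    ring

end lowerShift

end Matrix

/-- det(A − S) = ∑_{T ⊆ {1,…,n−1}} det A_{{0}∪T, (T−1)∪{n−1}}, where S_{i j} = δ_{i,j+1}
and the submatrix has rows {0}∪T and columns (T−1)∪{n−1}, each in increasing order. -/
theorem det_sub_S_eq_sum_submatrices {R : Type*} [CommRing R] (n : ℕ) (hn : 0 < n)
    (A : Matrix (Fin n) (Fin n) R) :
    (A - Matrix.of fun i j : Fin n => if (i : ℕ) = (j : ℕ) + 1 then (1 : R) else 0).det =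
      ∑ T ∈ (Finset.univ.filter fun t : Fin n => (t : ℕ) ≠ 0).powerset,
        (Matrix.of fun a b : Fin (T.card + 1) =>
          A ((Finset.sort (insert (⟨0, hn⟩ : Fin n) T) (· ≤ ·)).getD a ⟨0, hn⟩)
            ((Finset.sort
                (insert (⟨n - 1, Nat.sub_lt hn Nat.one_pos⟩ : Fin n)
                  (T.image fun t : Fin n =>
                    (⟨(t : ℕ) - 1, lt_of_le_of_lt (Nat.sub_le _ 1) t.isLt⟩ : Fin n))) (· ≤ ·)).getD
              b ⟨0, hn⟩)).det := by
  have hW : insert ⟨0, hn⟩ (univ.filter fun t : Fin n => (t : ℕ) ≠ 0) = univ := by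
    ext t
    simp [Fin.ext_iff, em]
  change (A - lowerShift n R).det = _
  rw [sub_eq_add_neg, det_add_eq_sum_det_piecewise,
    sum_eq_sum_powerset_insert_of_notMem hW (by simp) _
      fun s hs => det_piecewise_neg_lowerShift_eq_zero A rfl hs]
  exact sum_congr rfl fun T hT => det_piecewise_neg_lowerShift A (fun t => rfl) rfl rfl
    fun t ht => (mem_filter.1 (mem_powerset.1 hT ht)).2
end

section
/- Let R be a commutative ring and α, β ∈ R. Then in the formal power series ring R[[u,v]] one has (1 − α(u+v) − α²(β²−1)uv) · ∑_{i,j≥0} ( ∑_{k=0}^{min(i,j)} C(i,k) C(j,k) α^{i+j} β^{2k} ) u^i v^j = 1; that is, the coefficient of u^i v^j in 1/(1 − α(u+v) − α²(β²−1)uv) equals ∑_{k=0}^{min(i,j)} C(i,k) C(j,k) α^{i+j} β^{2k}. -/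
/-!
Write the coefficient of `uⁱvʲ` as `αⁱ⁺ʲ D(i,j)` with `D(i,j) = ∑ₖ C(i,k) C(j,k) β²ᵏ`. Comparing
coefficients, the identity says that `D(i,0) = D(0,j) = 1` and
`D(i+1,j+1) = D(i,j+1) + D(i+1,j) + (β² - 1) D(i,j)`, a Delannoy-type recurrence that follows
from Pascal's rule applied to both binomial factors.
-/

open Finset

/-- The formal power series in R[[u,v]] whose coefficient of uⁱvʲ is
∑_{k=0}^{min(i,j)} C(i,k) C(j,k) α^{i+j} β^{2k}; here the variable u is X 0 and
v is X 1, and the coefficient at the monomial d is read off from i = d 0, j = d 1. -/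
noncomputable def seriesLLt {R : Type*} [CommRing R] (α β : R) :
    MvPowerSeries (Fin 2) R :=
  fun d =>
    ∑ k ∈ Finset.range (min (d 0) (d 1) + 1),
      (Nat.choose (d 0) k : R) * (Nat.choose (d 1) k : R) * α ^ (d 0 + d 1) * β ^ (2 * k)

section Delannoy

variable {R : Type*} [CommRing R]

theorem Finset.sum_range_succ_choose_mul (n : ℕ) (y : ℕ → R) :
    ∑ k ∈ range (n + 2), ((n + 1).choose k : R) * y k =
      ∑ k ∈ range (n + 1), (n.choose k : R) * (y k + y (k + 1)) := by
  have hshift : ∑ k ∈ range (n + 1), (n.choose k : R) * y k =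
      ∑ k ∈ range (n + 1), (n.choose (k + 1) : R) * y (k + 1) + y 0 := by
    rw [sum_range_succ', sum_range_succ (fun k => (n.choose (k + 1) : R) * y (k + 1))]
    simp
  simp only [sum_range_succ' _ (n + 1), Nat.choose_succ_succ, Nat.cast_add, mul_add, add_mul,
    sum_add_distrib, hshift, Nat.choose_zero_right, Nat.cast_one, one_mul]
  ring

/-- At `x = 2` these are the Delannoy numbers. -/
noncomputable def delannoy (x : R) (i j : ℕ) : R :=
  ∑ k ∈ range (min i j + 1), (i.choose k : R) * j.choose k * x ^ k

theorem delannoy_eq_sum_range (x : R) {i j N : ℕ} (h : min i j < N) :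
    delannoy x i j = ∑ k ∈ range N, (i.choose k : R) * j.choose k * x ^ k := by
  refine sum_subset (range_subset_range.2 h) fun k _ hk => ?_
  rcases min_choice i j with hm | hm <;> rw [mem_range, hm, not_lt] at hk <;>
    simp [Nat.choose_eq_zero_of_lt (Nat.lt_of_succ_le hk)]

@[simp]
theorem delannoy_zero_left (x : R) (j : ℕ) : delannoy x 0 j = 1 := by
  simp [delannoy]

@[simp]
theorem delannoy_zero_right (x : R) (i : ℕ) : delannoy x i 0 = 1 := by
  simp [delannoy]

theorem delannoy_succ_succ (x : R) (i j : ℕ) :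
    delannoy x (i + 1) (j + 1) =
      delannoy x i (j + 1) + delannoy x (i + 1) j + (x - 1) * delannoy x i j := by
  have h (a b : ℕ) :
      delannoy x a b = ∑ k ∈ range (a + 1), (a.choose k : R) * (b.choose k * x ^ k) := by
    rw [delannoy_eq_sum_range x (Nat.lt_succ_of_le (min_le_left a b))]
    simp only [mul_assoc]
  have hpascal (k : ℕ) : ((j + 1).choose (k + 1) : R) * x ^ (k + 1) =
      x * (j.choose k * x ^ k) + j.choose (k + 1) * x ^ (k + 1) := by
    rw [Nat.choose_succ_succ, Nat.cast_add]
    ring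
  simp only [h]
  rw [sum_range_succ_choose_mul, sum_range_succ_choose_mul]
  simp only [hpascal, mul_add, sum_add_distrib, ← mul_sum, mul_left_comm _ x]
  ring

end Delannoy

namespace MvPowerSeries
variable {σ R : Type*} [CommRing R]

theorem coeff_single_add_X_mul (s : σ) (n : σ →₀ ℕ) (φ : MvPowerSeries σ R) :
    coeff (Finsupp.single s 1 + n) (X s * φ) = coeff n φ := by
  rw [X, coeff_add_monomial_mul, one_mul]

theorem coeff_X_mul_of_eq_zero {s : σ} {n : σ →₀ ℕ} (h : n s = 0) (φ : MvPowerSeries σ R) :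
    coeff n (X s * φ) = 0 := by
  rw [X, coeff_monomial_mul, if_neg]
  simp [Finsupp.single_le_iff, h]

theorem one_sub_mul_eq_one_of_recurrence (a c : R) {F : MvPowerSeries (Fin 2) R}
    {f : ℕ → ℕ → R} (hF : ∀ d, coeff d F = f (d 0) (d 1)) (h00 : f 0 0 = 1)
    (hleft : ∀ i, f (i + 1) 0 = a * f i 0) (hright : ∀ j, f 0 (j + 1) = a * f 0 j)
    (hsucc : ∀ i j, f (i + 1) (j + 1) = a * f i (j + 1) + a * f (i + 1) j + c * f i j) :
    (1 - C a * (X 0 + X 1) - C c * (X 0 * X 1)) * F = 1 := by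
  ext d
  obtain ⟨i, j, rfl⟩ : ∃ i j, d = Finsupp.single 0 i + Finsupp.single 1 j :=
    ⟨d 0, d 1, by ext s; fin_cases s <;> simp⟩
  have hF' (i j : ℕ) : coeff (Finsupp.single 0 i + Finsupp.single 1 j) F = f i j := by
    simp [hF]
  have hX0 (i j : ℕ) (φ : MvPowerSeries (Fin 2) R) :
      coeff (Finsupp.single 0 (i + 1) + Finsupp.single 1 j) (X 0 * φ) =
        coeff (Finsupp.single 0 i + Finsupp.single 1 j) φ := by
    rw [Finsupp.single_add, add_comm (Finsupp.single _ i), add_assoc, coeff_single_add_X_mul]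
  have hX1 (i j : ℕ) (φ : MvPowerSeries (Fin 2) R) :
      coeff (Finsupp.single 0 i + Finsupp.single 1 (j + 1)) (X 1 * φ) =
        coeff (Finsupp.single 0 i + Finsupp.single 1 j) φ := by
    rw [Finsupp.single_add, add_comm _ (Finsupp.single _ 1), add_left_comm,
      coeff_single_add_X_mul]
  have hX0_zero (j : ℕ) (φ : MvPowerSeries (Fin 2) R) :
      coeff (Finsupp.single 0 0 + Finsupp.single 1 j) (X 0 * φ) = 0 :=
    coeff_X_mul_of_eq_zero (by simp) φ
  have hX1_zero (i : ℕ) (φ : MvPowerSeries (Fin 2) R) :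
      coeff (Finsupp.single 0 i + Finsupp.single 1 0) (X 1 * φ) = 0 :=
    coeff_X_mul_of_eq_zero (by simp) φ
  simp only [sub_mul, one_mul, add_mul, mul_assoc, map_sub, map_add, coeff_C_mul, coeff_one]
  rcases i with _ | i <;> rcases j with _ | j
  all_goals simp only [hF', hX0, hX1, hX0_zero, hX1_zero]
  · simp [h00]
  · rw [if_neg (by simp), hright]
    ring
  · rw [if_neg (by simp), hleft]
    ring
  · rw [if_neg (by simp), hsucc]
    ring

end MvPowerSeries

theorem coeff_seriesLLt {R : Type*} [CommRing R] (α β : R) (d : Fin 2 →₀ ℕ) :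
    MvPowerSeries.coeff d (seriesLLt α β) = α ^ (d 0 + d 1) * delannoy (β ^ 2) (d 0) (d 1) := by
  rw [MvPowerSeries.coeff_apply, delannoy, mul_sum]
  exact sum_congr rfl fun k _ => by ring

/-- In R[[u,v]] one has
(1 − α(u+v) − α²(β²−1)uv) · ∑_{i,j≥0} (∑_{k=0}^{min(i,j)} C(i,k) C(j,k) α^{i+j} β^{2k}) uⁱvʲ = 1,
where u = X 0 and v = X 1. -/
theorem one_sub_mul_series_eq_one {R : Type*} [CommRing R] (α β : R) :
    ((1 : MvPowerSeries (Fin 2) R)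
        - MvPowerSeries.C (σ := Fin 2) (R := R) α * (MvPowerSeries.X 0 + MvPowerSeries.X 1)
        - MvPowerSeries.C (σ := Fin 2) (R := R) (α ^ 2 * (β ^ 2 - 1)) *
            (MvPowerSeries.X 0 * MvPowerSeries.X 1)) * seriesLLt α β = 1 := by
  refine MvPowerSeries.one_sub_mul_eq_one_of_recurrence α _
    (f := fun i j => α ^ (i + j) * delannoy (β ^ 2) i j) (coeff_seriesLLt α β) ?_ ?_ ?_ ?_
  · simp
  · intro i
    simp only [delannoy_zero_right]
    ring
  · intro j
    simp only [delannoy_zero_left]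
    ring
  · intro i j
    rw [delannoy_succ_succ]
    ring
end

section
/- For every positive integer n, all complex numbers x, y, z, and every complex number ω satisfying y ω² + (1−x−y) ω + x = 0, one has (I + (x−ωy−1)S) · M_ASM(n,x,y,z) = M_DPP(n,x,y,z) · (I + (ω−1)Sᵀ), where I is the n×n identity matrix. -/
open Finset Matrix

/-- The subdiagonal matrix S with S_{i j} = δ_{i,j+1}. -/
noncomputable def Smat (n : ℕ) : Matrix (Fin n) (Fin n) ℂ :=
  Matrix.of fun i j => if (i : ℕ) = (j : ℕ) + 1 then 1 else 0

/-! ### Auxiliary scalar sums -/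

noncomputable def Pp (x y : ℂ) (i j : ℕ) : ℂ :=
  ∑ k ∈ Finset.range (i+1), (i.choose k : ℂ) * (j.choose k : ℂ) * x^k * y^(i-k)

noncomputable def Qp (x y : ℂ) (i m : ℕ) : ℂ :=
  ∑ k ∈ Finset.range (i+1), ((i-1).choose (i-k) : ℂ) * (m.choose k : ℂ) * x^k * y^(i-k)

noncomputable def Rr (n : ℕ) (x y z : ℂ) (i : ℕ) : ℂ :=
  ∑ k ∈ Finset.range (i+1), ∑ l ∈ Finset.range (k+1),
    (i.choose k : ℂ) * ((n-l-2).choose (k-l) : ℂ) * x^k * y^(i-k) * z^(l+1)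

noncomputable def Tt (n : ℕ) (x y z : ℂ) (i : ℕ) : ℂ :=
  ∑ k ∈ Finset.range (i+1), ∑ l ∈ Finset.range (k+1),
    ((i-1).choose (i-k) : ℂ) * ((n-l-1).choose (k-l) : ℂ) * x^k * y^(i-k) * z^l

lemma Rr_zero (n : ℕ) (x y z : ℂ) : Rr n x y z 0 = z := by simp [Rr]

lemma Tt_zero (n : ℕ) (x y z : ℂ) : Tt n x y z 0 = 1 := by simp [Tt]

lemma Qp_col_zero (x y : ℂ) (i : ℕ) : Qp x y (i+1) 0 = 0 := by
  unfold Qp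
  apply Finset.sum_eq_zero
  intro k hk
  match k with
  | 0 => simp [Nat.choose_eq_zero_of_lt (Nat.lt_succ_self i)]
  | (k+1) => simp [Nat.choose_eq_zero_of_lt (Nat.succ_pos k)]

lemma Pp_min (x y : ℂ) (i j : ℕ) :
    (∑ k ∈ Finset.range (min i j + 1), (i.choose k : ℂ) * (j.choose k : ℂ) * x^k * y^(i-k))
      = Pp x y i j := by
  unfold Pp
  apply Finset.sum_subset
  · intro k hk; simp only [Finset.mem_range] at *; omega
  · intro k hk hk2
    simp only [Finset.mem_range] at hk hk2
    have : j < k := by omega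
    simp [Nat.choose_eq_zero_of_lt this]

lemma Qp_min (x y : ℂ) (i m : ℕ) :
    (∑ k ∈ Finset.range (min i m + 1), ((i-1).choose (i-k) : ℂ) * (m.choose k : ℂ) * x^k * y^(i-k))
      = Qp x y i m := by
  unfold Qp
  apply Finset.sum_subset
  · intro k hk; simp only [Finset.mem_range] at *; omega
  · intro k hk hk2
    simp only [Finset.mem_range] at hk hk2
    have : m < k := by omega
    simp [Nat.choose_eq_zero_of_lt this]

/-! ### Shifted-sum representations -/

lemma y_Pp (x y : ℂ) (i j : ℕ) :
    y * Pp x y i j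
      = (∑ k ∈ Finset.range (i+1), (i.choose (k+1) : ℂ) * (j.choose (k+1) : ℂ) * x^(k+1) * y^(i-k))
        + y^(i+1) := by
  unfold Pp
  rw [Finset.sum_range_succ' _ i]
  rw [Finset.sum_range_succ
    (fun k => (i.choose (k+1) : ℂ) * (j.choose (k+1) : ℂ) * x^(k+1) * y^(i-k)) i]
  simp only [Nat.choose_eq_zero_of_lt (Nat.lt_succ_self i), Nat.cast_zero, zero_mul, add_zero,
    Nat.choose_zero_right, Nat.cast_one, one_mul, pow_zero, mul_one, Nat.sub_zero]
  rw [mul_add, Finset.mul_sum, ← pow_succ']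
  congr 1
  apply Finset.sum_congr rfl
  intro k hk
  simp only [Finset.mem_range] at hk
  have h : i - k = (i - (k+1)) + 1 := by omega
  rw [h, pow_succ]
  ring

lemma Qp_succ (x y : ℂ) (i m : ℕ) :
    Qp x y (i+1) m
      = ∑ k ∈ Finset.range (i+1), (i.choose k : ℂ) * (m.choose (k+1) : ℂ) * x^(k+1) * y^(i-k) := by
  unfold Qp
  rw [Finset.sum_range_succ' _ (i+1)]
  simp only [Nat.add_sub_cancel, Nat.sub_zero, Nat.succ_sub_succ]
  rw [Nat.choose_eq_zero_of_lt (Nat.lt_succ_self i)]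
  simp only [Nat.cast_zero, zero_mul, add_zero]
  apply Finset.sum_congr rfl
  intro k hk
  simp only [Finset.mem_range] at hk
  rw [Nat.choose_symm (by omega : k ≤ i)]

lemma I1 (x y : ℂ) (i j : ℕ) :
    Pp x y (i+1) j = y * Pp x y i j + Qp x y (i+1) j := by
  rw [y_Pp, Qp_succ]
  unfold Pp
  rw [Finset.sum_range_succ' _ (i+1)]
  simp only [Nat.choose_zero_right, Nat.cast_one, one_mul, pow_zero, mul_one, Nat.sub_zero,
    Nat.succ_sub_succ]
  rw [add_assoc, add_comm (y^(i+1)) _, ← add_assoc, ← Finset.sum_add_distrib]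
  congr 1
  apply Finset.sum_congr rfl
  intro k hk
  rw [Nat.choose_succ_succ i k]
  push_cast
  ring

lemma I2 (x y : ℂ) (i j : ℕ) :
    Qp x y (i+1) (j+1) = Qp x y (i+1) j + x * Pp x y i j := by
  rw [Qp_succ, Qp_succ]
  unfold Pp
  rw [Finset.mul_sum, ← Finset.sum_add_distrib]
  apply Finset.sum_congr rfl
  intro k hk
  rw [Nat.choose_succ_succ j k]
  push_cast
  ring

lemma Tt_succ (n : ℕ) (x y z : ℂ) (i : ℕ) :
    Tt n x y z (i+1)
      = ∑ k ∈ Finset.range (i+1), ∑ l ∈ Finset.range (k+2),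
          (i.choose k : ℂ) * ((n-l-1).choose (k+1-l) : ℂ) * x^(k+1) * y^(i-k) * z^l := by
  unfold Tt
  rw [Finset.sum_range_succ' _ (i+1)]
  simp only [Nat.add_sub_cancel, Nat.succ_sub_succ, Nat.sub_zero]
  rw [Nat.choose_eq_zero_of_lt (Nat.lt_succ_self i)]
  simp only [Nat.cast_zero, zero_mul, Finset.sum_const_zero, add_zero]
  apply Finset.sum_congr rfl
  intro k hk
  simp only [Finset.mem_range] at hk
  rw [Nat.choose_symm (by omega : k ≤ i)]

lemma Rr_succ (n : ℕ) (x y z : ℂ) (i : ℕ) :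
    Rr n x y z (i+1)
      = (∑ k ∈ Finset.range (i+1), ∑ l ∈ Finset.range (k+2),
          ((i+1).choose (k+1) : ℂ) * ((n-l-2).choose (k+1-l) : ℂ) * x^(k+1) * y^(i-k) * z^(l+1))
        + y^(i+1) * z := by
  unfold Rr
  rw [Finset.sum_range_succ' _ (i+1)]
  simp only [Nat.succ_sub_succ, Nat.sub_zero, Nat.choose_zero_right, Nat.cast_one, one_mul,
    pow_zero, mul_one]
  congr 1
  rw [Finset.sum_range_one]
  simp

lemma y_Rr (n : ℕ) (x y z : ℂ) (i : ℕ) :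
    y * Rr n x y z i
      = (∑ k ∈ Finset.range (i+1), ∑ l ∈ Finset.range (k+2),
          (i.choose (k+1) : ℂ) * ((n-l-2).choose (k+1-l) : ℂ) * x^(k+1) * y^(i-k) * z^(l+1))
        + y^(i+1) * z := by
  unfold Rr
  rw [Finset.sum_range_succ' _ i]
  rw [Finset.sum_range_succ
    (fun k => ∑ l ∈ Finset.range (k+2),
      (i.choose (k+1) : ℂ) * ((n-l-2).choose (k+1-l) : ℂ) * x^(k+1) * y^(i-k) * z^(l+1)) i]
  simp only [Nat.choose_eq_zero_of_lt (Nat.lt_succ_self i), Nat.cast_zero, zero_mul,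
    Finset.sum_const_zero, add_zero, Finset.sum_range_one, Nat.choose_zero_right, Nat.cast_one,
    one_mul, pow_zero, Nat.sub_zero]
  rw [mul_add]
  congr 1
  · rw [Finset.mul_sum]
    apply Finset.sum_congr rfl
    intro k hk
    simp only [Finset.mem_range] at hk
    rw [Finset.mul_sum]
    apply Finset.sum_congr rfl
    intro l hl
    have h : i - k = (i - (k+1)) + 1 := by omega
    rw [h, pow_succ]
    ring
  · rw [Finset.sum_range_one]
    simp only [Nat.sub_self, Nat.choose_zero_right, Nat.cast_one, one_mul, mul_one, zero_add,
      pow_one]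
    ring

lemma I4 (n : ℕ) (x y z : ℂ) (i : ℕ) :
    Tt n x y z (i+1) = Qp x y (i+1) (n-1) + x * Rr n x y z i := by
  rw [Tt_succ, Qp_succ]
  unfold Rr
  rw [Finset.mul_sum, ← Finset.sum_add_distrib]
  apply Finset.sum_congr rfl
  intro k hk
  rw [Finset.sum_range_succ' _ (k+1)]
  simp only [Nat.succ_sub_succ, Nat.sub_zero, pow_zero, mul_one]
  rw [add_comm]
  congr 1
  rw [Finset.mul_sum]
  apply Finset.sum_congr rfl
  intro l hl
  have e1 : n - (l+1) - 1 = n - l - 2 := by omega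
  rw [e1]
  ring

lemma Jid (n m : ℕ) (z : ℂ) (hm : m + 1 ≤ n) :
    (∑ l ∈ Finset.range (m+1), ((n-l-2).choose (m-l) : ℂ) * z^(l+1))
      = (z - 1) * (∑ l ∈ Finset.range (m+1), ((n-l-1).choose (m-l) : ℂ) * z^l)
        + ((n-1).choose m : ℂ) := by
  have h1 : (∑ l ∈ Finset.range (m+1), ((n-l-1).choose (m-l) : ℂ) * z^(l+1))
      - (∑ l ∈ Finset.range (m+1), ((n-l-2).choose (m-l) : ℂ) * z^(l+1))
      = ∑ l ∈ Finset.range m, ((n-l-2).choose (m-l-1) : ℂ) * z^(l+1) := by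
    rw [← Finset.sum_sub_distrib]
    rw [Finset.sum_range_succ]
    have hlast : ((n-m-1).choose (m-m) : ℂ) * z^(m+1)
        - ((n-m-2).choose (m-m) : ℂ) * z^(m+1) = 0 := by
      simp [Nat.sub_self]
    rw [hlast, add_zero]
    apply Finset.sum_congr rfl
    intro l hl
    simp only [Finset.mem_range] at hl
    have e1 : n - l - 1 = (n - l - 2) + 1 := by omega
    have e2 : m - l = (m - l - 1) + 1 := by omega
    rw [e1, e2, Nat.choose_succ_succ]
    push_cast
    ring
  have h2 : (∑ l ∈ Finset.range (m+1), ((n-l-1).choose (m-l) : ℂ) * z^l)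
      = ((n-1).choose m : ℂ) + ∑ l ∈ Finset.range m, ((n-l-2).choose (m-l-1) : ℂ) * z^(l+1) := by
    rw [Finset.sum_range_succ' _ m]
    simp only [Nat.sub_zero, pow_zero, mul_one]
    rw [add_comm]
    congr 1
  have h3 : (z - 1) * (∑ l ∈ Finset.range (m+1), ((n-l-1).choose (m-l) : ℂ) * z^l)
      = (∑ l ∈ Finset.range (m+1), ((n-l-1).choose (m-l) : ℂ) * z^(l+1))
        - (∑ l ∈ Finset.range (m+1), ((n-l-1).choose (m-l) : ℂ) * z^l) := by
    rw [Finset.mul_sum, ← Finset.sum_sub_distrib]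
    apply Finset.sum_congr rfl
    intro l hl
    ring
  rw [h3, h2]
  linear_combination -h1

lemma I3 (n : ℕ) (x y z : ℂ) (i : ℕ) (hi : i + 2 ≤ n) :
    Rr n x y z (i+1)
      = y * Rr n x y z i + (z-1) * Tt n x y z (i+1) + Qp x y (i+1) (n-1) := by
  rw [Rr_succ, y_Rr, Tt_succ, Qp_succ, Finset.mul_sum]
  have h : ∀ k ∈ Finset.range (i+1),
      (∑ l ∈ Finset.range (k+2),
        ((i+1).choose (k+1) : ℂ) * ((n-l-2).choose (k+1-l) : ℂ) * x^(k+1) * y^(i-k) * z^(l+1))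
      = (∑ l ∈ Finset.range (k+2),
          (i.choose (k+1) : ℂ) * ((n-l-2).choose (k+1-l) : ℂ) * x^(k+1) * y^(i-k) * z^(l+1))
        + (((z-1) * ∑ l ∈ Finset.range (k+2),
            (i.choose k : ℂ) * ((n-l-1).choose (k+1-l) : ℂ) * x^(k+1) * y^(i-k) * z^l)
          + (i.choose k : ℂ) * (((n-1)).choose (k+1) : ℂ) * x^(k+1) * y^(i-k)) := by
    intro k hk
    simp only [Finset.mem_range] at hk
    have hJ := Jid n (k+1) z (by omega)
    have f1 : ∀ (c : ℂ), (∑ l ∈ Finset.range (k+2),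
        c * ((n-l-2).choose (k+1-l) : ℂ) * x^(k+1) * y^(i-k) * z^(l+1))
        = c * x^(k+1) * y^(i-k)
          * ∑ l ∈ Finset.range (k+2), ((n-l-2).choose (k+1-l) : ℂ) * z^(l+1) := by
      intro c
      rw [Finset.mul_sum]
      exact Finset.sum_congr rfl fun l _ => by ring
    have f2 : (∑ l ∈ Finset.range (k+2),
        (i.choose k : ℂ) * ((n-l-1).choose (k+1-l) : ℂ) * x^(k+1) * y^(i-k) * z^l)
        = (i.choose k : ℂ) * x^(k+1) * y^(i-k)
          * ∑ l ∈ Finset.range (k+2), ((n-l-1).choose (k+1-l) : ℂ) * z^l := by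
      rw [Finset.mul_sum]
      exact Finset.sum_congr rfl fun l _ => by ring
    rw [f1, f1, f2]
    have hp : ((i+1).choose (k+1) : ℂ) = (i.choose k : ℂ) + (i.choose (k+1) : ℂ) := by
      exact_mod_cast Nat.choose_succ_succ i k
    linear_combination (x^(k+1) * y^(i-k)
        * (∑ l ∈ Finset.range (k+2), ((n-l-2).choose (k+1-l) : ℂ) * z^(l+1))) * hp
      + ((i.choose k : ℂ) * x^(k+1) * y^(i-k)) * hJ
  rw [Finset.sum_congr rfl h, Finset.sum_add_distrib, Finset.sum_add_distrib]
  ring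

/-! ### Entry functions on ℕ -/

noncomputable def aa (n : ℕ) (x y z ω : ℂ) (i j : ℕ) : ℂ :=
  if j = n - 1 then
    (1 - ω) * (if i = j then 1 else 0) + ω * Rr n x y z i
  else
    (1 - ω) * (if i = j then 1 else 0) +
      ω * ∑ k ∈ Finset.range (min i j + 1),
        (i.choose k : ℂ) * (j.choose k : ℂ) * x^k * y^(i-k)

noncomputable def dd (n : ℕ) (x y z ω : ℂ) (i j : ℕ) : ℂ :=
  if j = n - 1 then
    (1 + ω * (z - 1)) * Tt n x y z i
  else
    -(if i = j + 1 then 1 else 0) +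
      ∑ k ∈ Finset.range (min i (j+1) + 1),
        ((i-1).choose (i-k) : ℂ) * ((j+1).choose k : ℂ) * x^k * y^(i-k)

lemma MASMz_apply (n : ℕ) (x y z ω : ℂ) (i j : Fin n) :
    MASMz n x y z ω i j = aa n x y z ω (i : ℕ) (j : ℕ) := by
  simp only [MASMz, aa, Rr, Matrix.of_apply, Fin.ext_iff]

lemma MDPPz_apply (n : ℕ) (x y z ω : ℂ) (i j : Fin n) :
    MDPPz n x y z ω i j = dd n x y z ω (i : ℕ) (j : ℕ) := by
  simp only [MDPPz, dd, Tt, Matrix.of_apply]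

/-! ### Key scalar identities -/

lemma key0 (n : ℕ) (x y z ω : ℂ) (j : ℕ) (hn : 0 < n) (hj : j < n) :
    aa n x y z ω 0 j
      = dd n x y z ω 0 j + (ω - 1) * (if j = 0 then 0 else dd n x y z ω 0 (j - 1)) := by
  by_cases hjn : j = n - 1
  · by_cases hn1 : n = 1
    · subst hn1
      have hj0 : j = 0 := by omega
      subst hj0
      rw [if_pos rfl]
      unfold aa dd
      norm_num [Rr_zero, Tt_zero]
      ring
    · have hj1 : j ≠ 0 := by omega
      rw [if_neg hj1]
      unfold aa dd
      rw [if_pos hjn, if_pos hjn, if_neg (show ¬(j - 1 = n - 1) by omega),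
        if_neg (show ¬((0:ℕ) = j) by omega), if_neg (show ¬((0:ℕ) = (j-1)+1) by omega)]
      rw [Rr_zero, Tt_zero]
      simp only [Nat.zero_min, Finset.sum_range_one, Nat.choose_zero_right, Nat.zero_sub,
        Nat.cast_one, one_mul, pow_zero, mul_one, Nat.zero_sub]
      norm_num
      ring
  · by_cases hj0 : j = 0
    · subst hj0
      rw [if_pos rfl]
      unfold aa dd
      rw [if_neg hjn, if_neg hjn, if_pos rfl, if_neg (show ¬((0:ℕ) = 0 + 1) by omega)]
      simp only [Nat.zero_min, Finset.sum_range_one, Nat.choose_zero_right, Nat.zero_sub,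
        Nat.cast_one, one_mul, pow_zero, mul_one]
      norm_num
    · rw [if_neg hj0]
      unfold aa dd
      rw [if_neg hjn, if_neg hjn, if_neg (show ¬(j - 1 = n - 1) by omega),
        if_neg (show ¬((0:ℕ) = j) by omega), if_neg (show ¬((0:ℕ) = j + 1) by omega),
        if_neg (show ¬((0:ℕ) = (j-1)+1) by omega)]
      simp only [Nat.zero_min, Finset.sum_range_one, Nat.choose_zero_right, Nat.zero_sub,
        Nat.cast_one, one_mul, pow_zero, mul_one]
      norm_num

lemma keyS (n : ℕ) (x y z ω : ℂ) (i j : ℕ) (hi : i + 1 < n) (hj : j < n)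
    (hω : y * ω ^ 2 + (1 - x - y) * ω + x = 0) :
    aa n x y z ω (i+1) j + (x - ω*y - 1) * aa n x y z ω i j
      = dd n x y z ω (i+1) j
        + (ω - 1) * (if j = 0 then 0 else dd n x y z ω (i+1) (j - 1)) := by
  have hc1 : ω * (x - ω*y - 1) = x - ω*y := by linear_combination -hω
  by_cases hjn : j = n - 1
  · -- last column; n ≥ 2 since i+1 < n, and j = n-1 ≥ 1
    have hn2 : 2 ≤ n := by omega
    have hj1 : j ≠ 0 := by omega
    rw [if_neg hj1]
    unfold aa dd
    rw [if_pos hjn, if_pos hjn, if_pos hjn, if_neg (show ¬(j - 1 = n - 1) by omega)]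
    rw [if_neg (show ¬(i = j) by omega)]
    have hm : j - 1 + 1 = n - 1 := by omega
    rw [hm]
    rw [Qp_min x y (i+1) (n-1)]
    have hI3 := I3 n x y z i (by omega)
    have hI4 := I4 n x y z i
    have hd : (if i + 1 = j then (1:ℂ) else 0) = (if i + 1 = n - 1 then (1:ℂ) else 0) := by
      rw [hjn]
    rw [hd]
    linear_combination ω * hI3 - hI4 + (Rr n x y z i) * hc1
  · -- interior column
    have hjn' : j + 1 ≤ n - 1 := by omega
    unfold aa dd
    rw [if_neg hjn, if_neg hjn, if_neg hjn]
    have hmin1 : min (i+1) j + 1 ≤ i + 2 := by omega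
    rw [Pp_min x y (i+1) j, Pp_min x y i j, Qp_min x y (i+1) (j+1)]
    have hI1 := I1 x y i j
    have hI2 := I2 x y i j
    by_cases hj0 : j = 0
    · subst hj0
      rw [if_pos rfl]
      have hQ0 := Qp_col_zero x y i
      have hI2' := I2 x y i 0
      have hd1 : (if i + 1 = 0 then (1:ℂ) else 0) = 0 := by
        rw [if_neg (by omega)]
      have hd2 : (if i = 0 then (1:ℂ) else 0) = (if i + 1 = 0 + 1 then (1:ℂ) else 0) := by
        simp
      rw [hd1, hd2]
      rw [show Pp x y (i+1) 0 = y * Pp x y i 0 + Qp x y (i+1) 0 from I1 x y i 0]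
      rw [hQ0] at hI2' ⊢
      linear_combination -hI2' + (Pp x y i 0) * hc1
        + (if i + 1 = 0 + 1 then (1:ℂ) else 0) * (by linear_combination hω :
            (x - ω*y - 1) * (1 - ω) = -1)
    · rw [if_neg hj0]
      rw [if_neg (show ¬(j - 1 = n - 1) by omega)]
      have hm : j - 1 + 1 = j := by omega
      rw [hm]
      rw [Qp_min x y (i+1) j]
      have hd2 : (if i = j then (1:ℂ) else 0) = (if i + 1 = j + 1 then (1:ℂ) else 0) := by
        simp
      rw [hd2]
      rw [show Pp x y (i+1) j = y * Pp x y i j + Qp x y (i+1) j from hI1]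
      linear_combination -hI2 + (Pp x y i j) * hc1
        + (if i + 1 = j + 1 then (1:ℂ) else 0) * (by linear_combination hω :
            (x - ω*y - 1) * (1 - ω) = -1)

/-! ### Matrix multiplication with S -/

lemma S_mul_apply (n : ℕ) (A : Matrix (Fin n) (Fin n) ℂ) (i j : Fin n) (hi : (i : ℕ) ≠ 0) :
    (Smat n * A) i j = A ⟨(i : ℕ) - 1, lt_of_le_of_lt (Nat.sub_le _ 1) i.isLt⟩ j := by
  rw [Matrix.mul_apply]
  rw [Finset.sum_eq_single (⟨(i : ℕ) - 1, lt_of_le_of_lt (Nat.sub_le _ 1) i.isLt⟩ : Fin n)]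
  · simp only [Smat, Matrix.of_apply]
    rw [if_pos (by omega), one_mul]
  · intro b _ hb
    simp only [Smat, Matrix.of_apply]
    rw [if_neg, zero_mul]
    intro hc
    apply hb
    apply Fin.ext
    simp only []
    omega
  · intro h
    exact absurd (Finset.mem_univ _) h

lemma S_mul_apply_zero (n : ℕ) (A : Matrix (Fin n) (Fin n) ℂ) (i j : Fin n) (hi : (i : ℕ) = 0) :
    (Smat n * A) i j = 0 := by
  rw [Matrix.mul_apply]
  apply Finset.sum_eq_zero
  intro b _
  simp only [Smat, Matrix.of_apply]
  rw [if_neg (by omega), zero_mul]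

lemma mul_St_apply (n : ℕ) (A : Matrix (Fin n) (Fin n) ℂ) (i j : Fin n) (hj : (j : ℕ) ≠ 0) :
    (A * (Smat n)ᵀ) i j = A i ⟨(j : ℕ) - 1, lt_of_le_of_lt (Nat.sub_le _ 1) j.isLt⟩ := by
  rw [Matrix.mul_apply]
  rw [Finset.sum_eq_single (⟨(j : ℕ) - 1, lt_of_le_of_lt (Nat.sub_le _ 1) j.isLt⟩ : Fin n)]
  · simp only [Smat, Matrix.transpose_apply, Matrix.of_apply]
    rw [if_pos (by omega), mul_one]
  · intro b _ hb
    simp only [Smat, Matrix.transpose_apply, Matrix.of_apply]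
    rw [if_neg, mul_zero]
    intro hc
    apply hb
    apply Fin.ext
    simp only []
    omega
  · intro h
    exact absurd (Finset.mem_univ _) h

lemma mul_St_apply_zero (n : ℕ) (A : Matrix (Fin n) (Fin n) ℂ) (i j : Fin n) (hj : (j : ℕ) = 0) :
    (A * (Smat n)ᵀ) i j = 0 := by
  rw [Matrix.mul_apply]
  apply Finset.sum_eq_zero
  intro b _
  simp only [Smat, Matrix.transpose_apply, Matrix.of_apply]
  rw [if_neg (by omega), mul_zero]

/-- (I + (x−ωy−1)S) M_ASM(n,x,y,z) = M_DPP(n,x,y,z) (I + (ω−1)Sᵀ). -/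
theorem MASMz_MDPPz_relation (n : ℕ) (hn : 0 < n) (x y z ω : ℂ)
    (hω : y * ω ^ 2 + (1 - x - y) * ω + x = 0) :
    (1 + (x - ω * y - 1) • Smat n) * MASMz n x y z ω =
      MDPPz n x y z ω * (1 + (ω - 1) • (Smat n)ᵀ) := by
  ext i j
  have hL : ((1 + (x - ω * y - 1) • Smat n) * MASMz n x y z ω) i j
      = MASMz n x y z ω i j + (x - ω * y - 1) * ((Smat n * MASMz n x y z ω) i j) := by
    rw [Matrix.add_mul, Matrix.one_mul, Matrix.smul_mul, Matrix.add_apply, Matrix.smul_apply,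
      smul_eq_mul]
  have hR : (MDPPz n x y z ω * (1 + (ω - 1) • (Smat n)ᵀ)) i j
      = MDPPz n x y z ω i j + (ω - 1) * ((MDPPz n x y z ω * (Smat n)ᵀ) i j) := by
    rw [Matrix.mul_add, Matrix.mul_one, Matrix.mul_smul, Matrix.add_apply, Matrix.smul_apply,
      smul_eq_mul]
  rw [hL, hR, MASMz_apply, MDPPz_apply]
  by_cases hi0 : (i : ℕ) = 0
  · rw [S_mul_apply_zero n _ i j hi0, mul_zero, add_zero, hi0]
    by_cases hj0 : (j : ℕ) = 0
    · rw [mul_St_apply_zero n _ i j hj0, mul_zero, hj0]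
      have h := key0 n x y z ω 0 hn (by omega)
      rw [if_pos rfl, mul_zero] at h
      rw [h]
    · rw [mul_St_apply n _ i j hj0, MDPPz_apply, hi0]
      have h := key0 n x y z ω (j : ℕ) hn j.isLt
      rw [if_neg hj0] at h
      exact h
  · rw [S_mul_apply n _ i j hi0, MASMz_apply]
    have hii : ((i : ℕ) - 1) + 1 = (i : ℕ) := by omega
    by_cases hj0 : (j : ℕ) = 0
    · rw [mul_St_apply_zero n _ i j hj0, mul_zero, hj0]
      have h := keyS n x y z ω ((i : ℕ) - 1) 0 (by omega) (by omega) hω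
      rw [if_pos rfl, mul_zero, hii] at h
      exact h
    · rw [mul_St_apply n _ i j hj0, MDPPz_apply]
      have h := keyS n x y z ω ((i : ℕ) - 1) (j : ℕ) (by omega) j.isLt hω
      rw [if_neg hj0, hii] at h
      exact h
end

section
/- Let n be a positive integer, A an n×n alternating sign matrix, and A* the matrix defined by A*_{i j} = A_{i,n+1−j} (reflection of A in a central vertical line). Then A* is an n×n alternating sign matrix and ν(A*) = n(n−1)/2 − ν(A) − μ(A), μ(A*) = μ(A), and ρ(A*) = n−1−ρ(A). -/
open Finset Matrix

/-- An n×n alternating sign matrix: entries in {-1,0,1}, row and column sums 1,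
and nonzero entries alternate in sign along each row and each column. -/
def IsASM (n : ℕ) (A : Matrix (Fin n) (Fin n) ℤ) : Prop :=
  (∀ i j, A i j = -1 ∨ A i j = 0 ∨ A i j = 1) ∧
  (∀ i, ∑ j, A i j = 1) ∧
  (∀ j, ∑ i, A i j = 1) ∧
  (∀ (i j₁ j₂ : Fin n), j₁ < j₂ → A i j₁ ≠ 0 → A i j₂ ≠ 0 →
    (∀ j, j₁ < j → j < j₂ → A i j = 0) → A i j₂ = -A i j₁) ∧
  (∀ (j i₁ i₂ : Fin n), i₁ < i₂ → A i₁ j ≠ 0 → A i₂ j ≠ 0 →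
    (∀ i, i₁ < i → i < i₂ → A i j = 0) → A i₂ j = -A i₁ j)

/-- ν(A) = ∑_{1≤i<i'≤n, 1≤j'≤j≤n} A_{i j} A_{i' j'}. -/
def nuASM {n : ℕ} (A : Matrix (Fin n) (Fin n) ℤ) : ℤ :=
  ∑ i : Fin n, ∑ i' : Fin n, ∑ j : Fin n, ∑ j' : Fin n,
    if i < i' ∧ j' ≤ j then A i j * A i' j' else 0

/-- μ(A) = number of entries of A equal to -1. -/
def muASM {n : ℕ} (A : Matrix (Fin n) (Fin n) ℤ) : ℕ :=
  (Finset.univ.filter fun p : Fin n × Fin n => A p.1 p.2 = -1).card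

/-- ρ(A) = number of 0's to the left of the (unique) 1 in the first row of A. -/
def rhoASM {n : ℕ} (A : Matrix (Fin n) (Fin n) ℤ) : ℕ :=
  (@Finset.filter _ (fun j : Fin n =>
    ∃ i : Fin n, (i : ℕ) = 0 ∧ A i j = 0 ∧ ∃ j' : Fin n, j < j' ∧ A i j' = 1)
    (fun _ => @Fintype.decidableExistsFintype _ _ (fun _ => instDecidableAnd) _) Finset.univ).card

/-!
Reversing the columns preserves every defining property of an ASM and permutes the `-1` entries.

A sign-alternating sequence whose first entry is nonzero has sum `0` or that first entry; applied
to the columns (sums `1`) this shows that the first row has no `-1`, so it is a single `1` in some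
column `c`, and `ρ(A) = c`, `ρ(A*) = n - 1 - c`.

Since `[j' ≤ j] + [j ≤ j'] = 1 + [j = j']`, `ν(A) + ν(A*)` is `e₂` of the row sums plus the sum of
`e₂` over the columns, where `e₂ x = ∑_{i < i'} x_i x_i'`. With `2 e₂ x = (∑ x)² - ∑ x²`, all line
sums `1` and `∑ A_ij² = n + 2 μ(A)`, this gives `2 (ν(A) + ν(A*)) = n (n - 1) - 2 μ(A)`.
-/

def SignAlternating {ι : Type*} [LT ι] (f : ι → ℤ) : Prop :=
  ∀ j₁ j₂, j₁ < j₂ → f j₁ ≠ 0 → f j₂ ≠ 0 → (∀ j, j₁ < j → j < j₂ → f j = 0) → f j₂ = -f j₁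

namespace SignAlternating

variable {n : ℕ} {f : Fin n → ℤ}

theorem comp_rev (hf : SignAlternating f) : SignAlternating fun j : Fin n => f j.rev := by
  intro j₁ j₂ hlt h₁ h₂ hzero
  show f j₂.rev = -f j₁.rev
  rw [hf j₂.rev j₁.rev (Fin.rev_lt_rev.mpr hlt) h₂ h₁ fun j hj₂ hj₁ => by
    simpa using hzero j.rev (Fin.lt_rev_iff.mp hj₁) (Fin.rev_lt_iff.mp hj₂), neg_neg]

theorem sum_eq_zero_or_eq_apply_zero (hf : SignAlternating f) (hn : 0 < n)
    (h₀ : f ⟨0, hn⟩ ≠ 0) : ∑ i, f i = 0 ∨ ∑ i, f i = f ⟨0, hn⟩ := by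
  set s := f ⟨0, hn⟩
  let P : ℕ → ℤ := fun m => ∑ i ∈ univ.filter fun i : Fin n => (i : ℕ) < m, f i
  -- The prefix sums alternate between `0` and `s`; after a prefix with sum `0` the next nonzero
  -- entry is `s`, after one with sum `s` it is `-s`.
  have key : ∀ m ≤ n, (P m = 0 ∨ P m = s) ∧ ∀ k : Fin n, m ≤ k → f k ≠ 0 →
      (∀ j : Fin n, m ≤ j → j < k → f j = 0) → f k = s - 2 * P m := by
    intro m
    induction m with
    | zero =>
      refine fun _ => ⟨Or.inl (by simp [P]), fun k _ hk hbefore => ?_⟩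
      obtain rfl : k = ⟨0, hn⟩ := Fin.ext <| by
        by_contra hne
        exact h₀ (hbefore ⟨0, hn⟩ le_rfl (Fin.lt_def.mpr (Nat.pos_of_ne_zero hne)))
      simp [P, s]
    | succ m ih =>
      intro hm
      set a : Fin n := ⟨m, hm⟩
      obtain ⟨hPm, hnext⟩ := ih (by omega)
      have hP : P (m + 1) = P m + f a := by
        have hsplit : ∀ i : Fin n, (if (i : ℕ) < m + 1 then f i else 0) =
            (if (i : ℕ) < m then f i else 0) + if a = i then f i else 0 := by
          intro i
          simp only [a, Fin.ext_iff]
          split_ifs <;> omega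
        simp only [P, sum_filter, hsplit, sum_add_distrib, sum_ite_eq, mem_univ, if_true]
      by_cases ha : f a = 0
      · refine ⟨by rwa [hP, ha, add_zero], fun k hk hk0 hbefore => ?_⟩
        rw [hP, ha, add_zero]
        refine hnext k (by omega) hk0 fun j hj hjk => ?_
        rcases hj.eq_or_lt with hj | hj
        · rwa [show j = a from Fin.ext hj.symm]
        · exact hbefore j hj hjk
      · have hfa : f a = s - 2 * P m :=
          hnext a le_rfl ha fun j hj hja => absurd hja (not_lt.mpr hj)
        refine ⟨by rcases hPm with h | h <;> [right; left] <;> linarith, fun k hk hk0 hbefore => ?_⟩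
        have := hf a k (Fin.lt_def.mpr hk) ha hk0 fun j hj hjk => hbefore j hj hjk
        linarith
  have hall : P n = ∑ i, f i := by simp [P]
  rcases (key n le_rfl).1 with h | h <;> simp_all

end SignAlternating

theorem exists_eq_single_of_sum_eq_one {ι : Type*} [Fintype ι] [DecidableEq ι] {f : ι → ℤ}
    (h01 : ∀ i, f i = 0 ∨ f i = 1) (hsum : ∑ i, f i = 1) : ∃ c, f = Pi.single c 1 := by
  have hcard : #{i | f i = 1} = 1 := by
    have : ∑ i, f i = #{i | f i = 1} := by
      rw [natCast_card_filter]
      exact sum_congr rfl fun i _ => by rcases h01 i with h | h <;> simp [h]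
    omega
  obtain ⟨c, hc⟩ := card_eq_one.mp hcard
  refine ⟨c, funext fun j => ?_⟩
  have hj : f j = 1 ↔ j = c := by simpa using congrArg (j ∈ ·) hc
  rcases h01 j with h | h <;> by_cases hjc : j = c <;> simp_all

def esymmTwo {ι R : Type*} [Fintype ι] [LinearOrder ι] [CommRing R] (x : ι → R) : R :=
  ∑ i, ∑ j, if i < j then x i * x j else 0

theorem two_mul_esymmTwo {ι R : Type*} [Fintype ι] [LinearOrder ι] [CommRing R] (x : ι → R) :
    2 * esymmTwo x = (∑ i, x i) ^ 2 - ∑ i, x i ^ 2 := by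
  have htri : ∀ i j, x i * x j =
      ((if i < j then x i * x j else 0) + if j < i then x j * x i else 0) +
        if i = j then x i ^ 2 else 0 := by
    intro i j
    rcases lt_trichotomy i j with h | rfl | h
    · simp [h, h.ne, h.not_gt]
    · simp [sq]
    · simp [h, h.ne', h.not_gt, mul_comm]
  have hsq : (∑ i, x i) ^ 2 = ∑ i, ∑ j, x i * x j := by rw [sq, sum_mul_sum]
  rw [hsq, sum_congr rfl fun i _ => sum_congr rfl fun j _ => htri i j]
  simp only [sum_add_distrib, sum_ite_eq, mem_univ, if_true]
  rw [sum_comm (f := fun i j => if j < i then x j * x i else 0)]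
  unfold esymmTwo
  ring

theorem nuASM_add_nuASM_colRev {n : ℕ} (A : Matrix (Fin n) (Fin n) ℤ) :
    nuASM A + nuASM (of fun i j => A i j.rev) =
      esymmTwo (fun i => ∑ j, A i j) + ∑ j, esymmTwo fun i => A i j := by
  have hrev : nuASM (of fun i j => A i j.rev) = ∑ i, ∑ i', ∑ j, ∑ j',
      if i < i' ∧ j ≤ j' then A i j * A i' j' else 0 := by
    unfold nuASM
    refine sum_congr rfl fun i _ => sum_congr rfl fun i' _ => ?_
    rw [← Equiv.sum_comp Fin.revPerm]
    refine sum_congr rfl fun j _ => ?_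
    rw [← Equiv.sum_comp Fin.revPerm]
    simp [Fin.rev_le_rev]
  have hsplit : ∀ j j' : Fin n, ∀ x : ℤ, (if j' ≤ j then x else 0) + (if j ≤ j' then x else 0) =
      x + if j = j' then x else 0 := by
    intro j j' x
    rcases lt_trichotomy j j' with h | rfl | h
    · simp [h.ne, h.not_ge, h.le]
    · simp
    · simp [h.ne', h.not_ge, h.le]
  have hcols : ∑ j, esymmTwo (fun i => A i j) =
      ∑ i, ∑ i', if i < i' then ∑ j, A i j * A i' j else 0 := by
    unfold esymmTwo
    rw [sum_comm]
    refine sum_congr rfl fun i _ => ?_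
    rw [sum_comm]
    refine sum_congr rfl fun i' _ => ?_
    split_ifs <;> simp
  rw [hrev, hcols, esymmTwo, nuASM, ← sum_add_distrib, ← sum_add_distrib]
  refine sum_congr rfl fun i _ => ?_
  rw [← sum_add_distrib, ← sum_add_distrib]
  refine sum_congr rfl fun i' _ => ?_
  by_cases h : i < i'
  · simp only [h, true_and, if_true, ← sum_add_distrib, hsplit]
    simp [sum_add_distrib, sum_mul_sum]
  · simp [h]

theorem muASM_submatrix {n : ℕ} (A : Matrix (Fin n) (Fin n) ℤ) (e₁ e₂ : Fin n ≃ Fin n) :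
    muASM (A.submatrix e₁ e₂) = muASM A :=
  card_equiv (e₁.prodCongr e₂) fun p => by simp only [mem_filter, mem_univ, true_and]; rfl

theorem rhoASM_eq_of_top_row {n : ℕ} {A : Matrix (Fin n) (Fin n) ℤ} (hn : 0 < n) {c : Fin n}
    (hc : A ⟨0, hn⟩ = Pi.single c 1) : rhoASM A = c := by
  rw [← Fin.card_Iio c, rhoASM]
  congr 1
  ext j
  have hi : ∀ i : Fin n, (i : ℕ) = 0 ↔ i = ⟨0, hn⟩ := fun i => by rw [Fin.ext_iff]
  simp only [mem_filter, mem_univ, true_and, mem_Iio, hi, exists_eq_left, hc]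
  constructor
  · rintro ⟨-, j', hjj', hj'⟩
    obtain rfl : j' = c := by_contra fun h => by simp [h] at hj'
    exact hjj'
  · intro hjc
    exact ⟨by simp [hjc.ne], c, hjc, by simp⟩

namespace IsASM

variable {n : ℕ} {A : Matrix (Fin n) (Fin n) ℤ}

theorem colRev (hA : IsASM n A) : IsASM n (of fun i j => A i j.rev) := by
  obtain ⟨hentry, hrow, hcol, hrowAlt, hcolAlt⟩ := hA
  exact ⟨fun i j => hentry i j.rev, fun i => (Equiv.sum_comp Fin.revPerm (A i)).trans (hrow i),
    fun j => hcol j.rev, fun i => SignAlternating.comp_rev (hrowAlt i), fun j => hcolAlt j.rev⟩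

theorem exists_top_row_eq_single (hA : IsASM n A) (hn : 0 < n) :
    ∃ c, A ⟨0, hn⟩ = Pi.single c 1 := by
  obtain ⟨-, hrow, hcol, -, hcolAlt⟩ := hA
  refine exists_eq_single_of_sum_eq_one (fun j => ?_) (hrow _)
  by_cases h : A ⟨0, hn⟩ j = 0
  · exact Or.inl h
  · have := SignAlternating.sum_eq_zero_or_eq_apply_zero (hcolAlt j) hn h
    rw [hcol j] at this
    omega

theorem sum_sum_sq (hA : IsASM n A) : ∑ i, ∑ j, A i j ^ 2 = n + 2 * muASM A := by
  obtain ⟨hentry, hrow, -, -, -⟩ := hA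
  have hpoint : ∀ i j, A i j ^ 2 = A i j + 2 * if A i j = -1 then 1 else 0 := by
    intro i j
    rcases hentry i j with h | h | h <;> simp [h]
  have hmu : (muASM A : ℤ) = ∑ i, ∑ j, if A i j = -1 then 1 else 0 := by
    rw [muASM, natCast_card_filter, ← univ_product_univ, sum_product]
  simp only [hpoint, sum_add_distrib, ← mul_sum, hrow, hmu]
  simp

theorem two_mul_nuASM_add_nuASM_colRev_add_muASM (hA : IsASM n A) :
    2 * (nuASM A + nuASM (of fun i j => A i j.rev) + muASM A) = n * (n - 1) := by
  have hsq := hA.sum_sum_sq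
  obtain ⟨-, hrow, hcol, -, -⟩ := hA
  have hrows : 2 * esymmTwo (fun i => ∑ j, A i j) = n ^ 2 - n := by
    simpa [hrow] using two_mul_esymmTwo fun _ : Fin n => (1 : ℤ)
  have hcols : 2 * ∑ j, esymmTwo (fun i => A i j) = n - (n + 2 * muASM A) := by
    simp only [mul_sum, two_mul_esymmTwo, hcol, one_pow, sum_sub_distrib]
    rw [sum_comm, hsq]
    simp
  rw [nuASM_add_nuASM_colRev]
  linear_combination hrows + hcols

end IsASM

/-- Vertical reflection A*_{i j} = A_{i,n+1−j} is an ASM, and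
ν(A*) = n(n−1)/2 − ν(A) − μ(A), μ(A*) = μ(A), ρ(A*) = n−1−ρ(A). -/
theorem ASM_reflection (n : ℕ) (hn : 0 < n) (A : Matrix (Fin n) (Fin n) ℤ)
    (hA : IsASM n A) :
    IsASM n (Matrix.of fun i j => A i j.rev) ∧
    nuASM (Matrix.of fun i j => A i j.rev) =
      (n : ℤ) * ((n : ℤ) - 1) / 2 - nuASM A - muASM A ∧
    muASM (Matrix.of fun i j => A i j.rev) = muASM A ∧
    rhoASM (Matrix.of fun i j => A i j.rev) = n - 1 - rhoASM A := by
  obtain ⟨c, hc⟩ := hA.exists_top_row_eq_single hn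
  have hcRev : (of fun i j => A i j.rev) ⟨0, hn⟩ = Pi.single c.rev 1 := by
    ext j
    simp [hc, Pi.single_apply, Fin.rev_eq_iff]
  refine ⟨hA.colRev, ?_, muASM_submatrix A (Equiv.refl _) Fin.revPerm, ?_⟩
  · have := hA.two_mul_nuASM_add_nuASM_colRev_add_muASM
    omega
  · rw [rhoASM_eq_of_top_row hn hcRev, rhoASM_eq_of_top_row hn hc, Fin.val_rev]
    omega
end
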